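/- arXiv:2008.03486 — 12 statements merged into one kernel-verified Lean document; each statement's English description precedes it below -/
import Mathlib

section
/- Let f : [0,1] → [0,1] be continuous and surjective. If there exists a positive integer k and closed subintervals A and B of [0,1] such that f(A) = f(B), A and B intersect in at most one point, A is nondegenerate, and some nondegenerate component of the preimage (f^k)⁻¹(A) is contained in A (i.e., there is a closed nondegenerate subinterval D ⊆ A with f^k(D) = A), then f admits a splitting sequence. -/
open Set Filter Topology

/-- `IsSplittingSeq f l r N S` : the sequence of closed proper subintervals
`T n = Icc (l n) (r n)` of `[0,1]` is a tight sequence for `f` (i.e. `f (T (n+1)) = T n`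
and `T n` is nondegenerate for all large `n`), and it is split by the nondegenerate
closed intervals `S n` for `n` in the infinite set `N`, meaning
`S n ∩ T n ⊆ {l n, r n}` and `f (S n) = f (T n)`. -/
def IsSplittingSeq (f : ℝ → ℝ) (l r : ℕ → ℝ) (N : Set ℕ) (S : ℕ → Set ℝ) : Prop :=
  (∀ n, l n ≤ r n) ∧
  (∀ n, Icc (l n) (r n) ⊆ Icc 0 1) ∧
  (∀ n, Icc (l n) (r n) ≠ Icc (0:ℝ) 1) ∧
  (∀ n, f '' Icc (l (n+1)) (r (n+1)) = Icc (l n) (r n)) ∧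
  (∃ m, ∀ n > m, l n < r n) ∧
  N.Infinite ∧
  (∀ n ∈ N, (∃ u v : ℝ, u < v ∧ S n = Icc u v) ∧ S n ⊆ Icc 0 1 ∧
    S n ∩ Icc (l n) (r n) ⊆ {l n, r n} ∧ f '' S n = f '' Icc (l n) (r n))

/-- `f` admits a splitting sequence. -/
def SplittingSeq (f : ℝ → ℝ) : Prop := ∃ l r N S, IsSplittingSeq f l r N S

/-! Pulling back along `f^[k]` inside `D` gives nondegenerate intervals `D = D₀ ⊇ D₁ ⊇ ⋯` with
`f^[k] (D (j + 1)) = D j`. Filling in the intermediate images, `T (j * k + i) = f^[k - i] (D j)`,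
gives a tight sequence with `T 0 = A`, which is proper because the nondegenerate interval `B`
meets `A` in at most one point. At `n = (j + 1) * k` we have `T n = D j ⊆ A`, and
`f (D j) ⊆ f A = f B` pulls back to an interval `S n ⊆ B`; a common point of `S n` and `T n`
lies in `A ∩ B`, hence is an endpoint of `T n`. -/

open Function

theorem Set.nontrivial_Icc_iff {α : Type*} [LinearOrder α] {a b : α} :
    (Icc a b).Nontrivial ↔ a < b := by
  rw [← not_subsingleton_iff, subsingleton_Icc_iff, not_le]

theorem Set.Nontrivial.image_of_image_iterate {α : Type*} {f : α → α} {s : Set α} {k : ℕ}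
    (h : (f^[k] '' s).Nontrivial) (hk : 0 < k) : (f '' s).Nontrivial := by
  obtain ⟨m, rfl⟩ := Nat.exists_eq_succ_of_ne_zero hk.ne'
  rw [iterate_succ, image_comp] at h
  exact nontrivial_of_image _ _ h

theorem Set.Icc_inter_Icc_subset_pair {α : Type*} [LinearOrder α] {l r b₁ b₂ : α}
    (hb : b₁ < b₂) (h : (Icc l r ∩ Icc b₁ b₂).Subsingleton) :
    Icc l r ∩ Icc b₁ b₂ ⊆ {l, r} := by
  intro x hx
  have ⟨⟨hlx, hxr⟩, hb₁x, hxb₂⟩ := hx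
  by_contra! hne
  simp only [mem_insert_iff, mem_singleton_iff, not_or] at hne
  rcases lt_or_ge x b₂ with hx₂ | hx₂
  · have hmin : min r b₂ = x := h ⟨⟨hlx.trans (le_min hxr hxb₂), min_le_left _ _⟩,
      hb₁x.trans (le_min hxr hxb₂), min_le_right _ _⟩ hx
    exact (lt_min (lt_of_le_of_ne hxr hne.2) hx₂).ne' hmin
  · have hmax : max l b₁ = x := h ⟨⟨le_max_left _ _, (max_le hlx hb₁x).trans hxr⟩,
      le_max_right _ _, (max_le hlx hb₁x).trans hxb₂⟩ hx
    exact (max_lt (lt_of_le_of_ne hlx (Ne.symm hne.1)) (hb.trans_le hx₂)).ne hmax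

theorem ContinuousOn.exists_Icc_subset_image_eq_of_map_eq {g : ℝ → ℝ} {u v p q : ℝ}
    (hg : ContinuousOn g (Icc u v)) (huv : u ≤ v) (hpq : p ≤ q) (hu : g u = p)
    (hv : g v = q) : ∃ u' v', Icc u' v' ⊆ Icc u v ∧ g '' Icc u' v' = Icc p q := by
  -- `v'` is the first time after `u` at which `g = q`, and `u'` the last one before `v'`
  -- at which `g = p`; in between, `g` cannot leave `[p, q]` without taking one of these values.
  set K := Icc u v ∩ g ⁻¹' {q}
  have hKbdd : BddBelow K := ⟨u, fun x hx => hx.1.1⟩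
  obtain ⟨⟨huv', hv'v⟩, hgv'⟩ : sInf K ∈ K :=
    (hg.preimage_isClosed_of_isClosed isClosed_Icc isClosed_singleton).csInf_mem
      ⟨v, right_mem_Icc.2 huv, hv⟩ hKbdd
  set v' := sInf K
  set L := Icc u v' ∩ g ⁻¹' {p}
  have hLbdd : BddAbove L := ⟨v', fun x hx => hx.1.2⟩
  obtain ⟨⟨huu', hu'v'⟩, hgu'⟩ : sSup L ∈ L :=
    ((hg.mono (Icc_subset_Icc_right hv'v)).preimage_isClosed_of_isClosed isClosed_Icc
      isClosed_singleton).csSup_mem ⟨u, left_mem_Icc.2 huv', hu⟩ hLbdd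
  set u' := sSup L
  have hsub : Icc u' v' ⊆ Icc u v := Icc_subset_Icc huu' hv'v
  have hg' := hg.mono hsub
  refine ⟨u', v', hsub, Subset.antisymm ?_ ?_⟩
  · rintro _ ⟨x, hx, rfl⟩
    constructor
    · by_contra! hlt
      obtain ⟨y, hy, hgy⟩ := intermediate_value_Icc hx.2
        (hg'.mono (Icc_subset_Icc_left hx.1)) ⟨hlt.le, hgv'.symm ▸ hpq⟩
      have hyu' : y ≤ u' := le_csSup hLbdd ⟨⟨huu'.trans (hx.1.trans hy.1), hy.2⟩, hgy⟩
      rw [le_antisymm (hy.1.trans hyu') hx.1, hgu'] at hlt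
      exact hlt.false
    · by_contra! hlt
      obtain ⟨y, hy, hgy⟩ := intermediate_value_Icc hx.1
        (hg'.mono (Icc_subset_Icc_right hx.2)) ⟨hgu'.symm ▸ hpq, hlt.le⟩
      have hv'y : v' ≤ y :=
        csInf_le hKbdd ⟨⟨huu'.trans hy.1, (hy.2.trans hx.2).trans hv'v⟩, hgy⟩
      rw [le_antisymm hx.2 (hv'y.trans hy.2), hgv'] at hlt
      exact hlt.false
  · rw [← hgu', ← hgv']
    exact intermediate_value_Icc hu'v' hg'

theorem ContinuousOn.exists_Icc_subset_image_eq {g : ℝ → ℝ} {c d p q : ℝ}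
    (hg : ContinuousOn g (Icc c d)) (hpq : p < q) (hsub : Icc p q ⊆ g '' Icc c d) :
    ∃ u v, u < v ∧ Icc u v ⊆ Icc c d ∧ g '' Icc u v = Icc p q := by
  suffices ∃ u v, Icc u v ⊆ Icc c d ∧ g '' Icc u v = Icc p q by
    obtain ⟨u, v, hsub, himg⟩ := this
    refine ⟨u, v, nontrivial_Icc_iff.1 (nontrivial_of_image g _ ?_), hsub, himg⟩
    rw [himg]
    exact nontrivial_Icc_iff.2 hpq
  obtain ⟨x, hx, hgx⟩ := hsub (left_mem_Icc.2 hpq.le)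
  obtain ⟨y, hy, hgy⟩ := hsub (right_mem_Icc.2 hpq.le)
  rcases le_total x y with hxy | hyx
  · obtain ⟨u, v, hsub', himg⟩ :=
      (hg.mono (Icc_subset_Icc hx.1 hy.2)).exists_Icc_subset_image_eq_of_map_eq hxy hpq.le hgx hgy
    exact ⟨u, v, hsub'.trans (Icc_subset_Icc hx.1 hy.2), himg⟩
  · -- `g` reaches `q` before `p`, so `-g` reaches `-q` before `-p`
    obtain ⟨u, v, hsub', himg⟩ :=
      (hg.mono (Icc_subset_Icc hy.1 hx.2)).neg.exists_Icc_subset_image_eq_of_map_eq hyx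
        (neg_le_neg hpq.le) (by simp [hgy]) (by simp [hgx])
    refine ⟨u, v, hsub'.trans (Icc_subset_Icc hy.1 hx.2), ?_⟩
    have hneg : g '' Icc u v = -((-g) '' Icc u v) := by
      rw [← image_neg_eq_neg, image_image]; simp
    rw [hneg, himg, neg_Icc, neg_neg, neg_neg]

theorem ContinuousOn.exists_seq_Icc_image_succ_eq {g : ℝ → ℝ} {d₁ d₂ : ℝ}
    (hg : ContinuousOn g (Icc d₁ d₂)) (hd : d₁ < d₂) (hD : Icc d₁ d₂ ⊆ g '' Icc d₁ d₂) :
    ∃ u v : ℕ → ℝ, u 0 = d₁ ∧ v 0 = d₂ ∧ (∀ j, u j < v j) ∧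
      (∀ j, Icc (u j) (v j) ⊆ Icc d₁ d₂) ∧ (∀ j, Icc (u j) (v j) ⊆ g '' Icc (u j) (v j)) ∧
      ∀ j, g '' Icc (u (j + 1)) (v (j + 1)) = Icc (u j) (v j) := by
  let P : ℝ × ℝ → Prop := fun I =>
    I.1 < I.2 ∧ Icc I.1 I.2 ⊆ Icc d₁ d₂ ∧ Icc I.1 I.2 ⊆ g '' Icc I.1 I.2
  have step : ∀ I : Subtype P, ∃ J : Subtype P, g '' Icc J.1.1 J.1.2 = Icc I.1.1 I.1.2 := by
    rintro ⟨I, hlt, hsub, hself⟩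
    obtain ⟨u, v, huv, hsub', himg⟩ := (hg.mono hsub).exists_Icc_subset_image_eq hlt hself
    exact ⟨⟨(u, v), huv, hsub'.trans hsub, himg ▸ hsub'⟩, himg⟩
  choose next hnext using step
  let D : ℕ → Subtype P := fun j => next^[j] ⟨(d₁, d₂), hd, subset_rfl, hD⟩
  refine ⟨fun j => (D j).1.1, fun j => (D j).1.2, rfl, rfl, fun j => (D j).2.1,
    fun j => (D j).2.2.1, fun j => (D j).2.2.2, fun j => ?_⟩
  simp only [D, iterate_succ_apply']
  exact hnext _

/-- For `i < k`, `interpolateIterates f k D (j * k + i) = f^[k - i] '' D j`. -/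
def interpolateIterates {α : Type*} (f : α → α) (k : ℕ) (D : ℕ → Set α) (n : ℕ) : Set α :=
  f^[k - n % k] '' D (n / k)

section interpolateIterates

variable {α : Type*} {f : α → α} {k : ℕ} {D : ℕ → Set α}

theorem interpolateIterates_zero : interpolateIterates f k D 0 = f^[k] '' D 0 := by
  simp [interpolateIterates]

theorem image_iterate_interpolateIterates (hk : 0 < k) (n : ℕ) :
    f^[n % k] '' interpolateIterates f k D n = f^[k] '' D (n / k) := by
  rw [interpolateIterates, ← image_comp, ← iterate_add,
    Nat.add_sub_cancel' (Nat.mod_lt n hk).le]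

theorem interpolateIterates_mul_succ (hk : 0 < k) (hD : ∀ j, f^[k] '' D (j + 1) = D j)
    (j : ℕ) : interpolateIterates f k D ((j + 1) * k) = D j := by
  simp [interpolateIterates, Nat.mul_div_cancel _ hk, hD]

theorem image_interpolateIterates_succ (hk : 0 < k) (hD : ∀ j, f^[k] '' D (j + 1) = D j)
    (n : ℕ) : f '' interpolateIterates f k D (n + 1) = interpolateIterates f k D n := by
  obtain ⟨q, i, hi, rfl⟩ : ∃ q i, i < k ∧ n = k * q + i :=
    ⟨n / k, n % k, Nat.mod_lt n hk, (Nat.div_add_mod n k).symm⟩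
  rw [interpolateIterates, interpolateIterates, ← image_comp, ← iterate_succ',
    Nat.mul_add_div hk, Nat.mul_add_mod, Nat.div_eq_of_lt hi, Nat.mod_eq_of_lt hi, add_zero,
    add_assoc]
  rcases Nat.lt_or_ge (i + 1) k with hi' | hi'
  · rw [Nat.mul_add_div hk, Nat.mul_add_mod, Nat.div_eq_of_lt hi', Nat.mod_eq_of_lt hi',
      add_zero]
    congr 2
    omega
  · obtain rfl : i + 1 = k := le_antisymm hi hi'
    rw [← mul_add_one, Nat.mul_div_cancel_left _ hk, Nat.mul_mod_right, Nat.sub_zero,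
      iterate_succ', image_comp, hD, Nat.add_sub_cancel_left, iterate_one]

end interpolateIterates

def IsTightSeq (f : ℝ → ℝ) (l r : ℕ → ℝ) : Prop :=
  (∀ n, l n ≤ r n) ∧
  (∀ n, Icc (l n) (r n) ⊆ Icc 0 1) ∧
  (∀ n, Icc (l n) (r n) ≠ Icc (0:ℝ) 1) ∧
  (∀ n, f '' Icc (l (n+1)) (r (n+1)) = Icc (l n) (r n)) ∧
  (∃ m, ∀ n > m, l n < r n)

theorem IsTightSeq.isSplittingSeq {f : ℝ → ℝ} {l r : ℕ → ℝ} {N : Set ℕ} {S : ℕ → Set ℝ}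
    (h : IsTightSeq f l r) (hN : N.Infinite)
    (hS : ∀ n ∈ N, (∃ u v : ℝ, u < v ∧ S n = Icc u v) ∧ S n ⊆ Icc 0 1 ∧
      S n ∩ Icc (l n) (r n) ⊆ {l n, r n} ∧ f '' S n = f '' Icc (l n) (r n)) :
    IsSplittingSeq f l r N S :=
  ⟨h.1, h.2.1, h.2.2.1, h.2.2.2.1, h.2.2.2.2, hN, hS⟩

theorem exists_isTightSeq_interpolateIterates {f : ℝ → ℝ} (hf : ContinuousOn f (Icc 0 1))
    (hsurj : f '' Icc 0 1 = Icc 0 1) {k : ℕ} (hk : 0 < k) {u v : ℕ → ℝ}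
    (huv : ∀ j, u j < v j) (h01 : ∀ j, Icc (u j) (v j) ⊆ Icc 0 1)
    (hself : ∀ j, Icc (u j) (v j) ⊆ f^[k] '' Icc (u j) (v j))
    (hback : ∀ j, f^[k] '' Icc (u (j + 1)) (v (j + 1)) = Icc (u j) (v j))
    (hproper : f^[k] '' Icc (u 0) (v 0) ≠ Icc 0 1) :
    ∃ l r : ℕ → ℝ, IsTightSeq f l r ∧ ∀ j, l ((j + 1) * k) = u j ∧ r ((j + 1) * k) = v j := by
  set T := interpolateIterates f k fun j => Icc (u j) (v j)
  have hmaps : MapsTo f (Icc 0 1) (Icc 0 1) := fun _ hx => hsurj ▸ mem_image_of_mem f hx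
  have hT : ∀ n, T n = Icc (sInf (T n)) (sSup (T n)) := fun n =>
    (((hf.iterate hmaps) _).mono (h01 _)).image_Icc (huv _).le
  have hlt : ∀ n, sInf (T n) < sSup (T n) := fun n => by
    refine nontrivial_Icc_iff.1 (hT n ▸ nontrivial_of_image f^[n % k] _ ?_)
    rw [image_iterate_interpolateIterates hk]
    exact (nontrivial_Icc_iff.2 (huv _)).mono (hself _)
  have hT01 : ∀ n, T n ⊆ Icc 0 1 := fun n =>
    (image_mono (h01 _)).trans (hmaps.iterate _).image_subset
  have hsucc : ∀ n, f '' T (n + 1) = T n := image_interpolateIterates_succ hk hback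
  have hproperT : ∀ n, T n ≠ Icc 0 1 := by
    intro n
    induction n with
    | zero => rwa [show T 0 = _ from interpolateIterates_zero]
    | succ n ih => exact fun h => ih (by rw [← hsucc, h, hsurj])
  refine ⟨fun n => sInf (T n), fun n => sSup (T n), ⟨fun n => (hlt n).le,
    fun n => hT n ▸ hT01 n, fun n => hT n ▸ hproperT n, fun n => hT n ▸ hT (n + 1) ▸ hsucc n,
    0, fun n _ => hlt n⟩, fun j => ?_⟩
  rw [← Icc_eq_Icc_iff (hlt _).le, ← hT]
  exact interpolateIterates_mul_succ hk hback j

theorem exists_splitting_Icc {f : ℝ → ℝ} {a₁ a₂ b₁ b₂ l r : ℝ}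
    (hfB : ContinuousOn f (Icc b₁ b₂)) (hfT : ContinuousOn f (Icc l r)) (hlr : l ≤ r)
    (hb : b₁ < b₂) (hAB : f '' Icc a₁ a₂ = f '' Icc b₁ b₂)
    (hABcap : (Icc a₁ a₂ ∩ Icc b₁ b₂).Subsingleton) (hTA : Icc l r ⊆ Icc a₁ a₂)
    (hnt : (f '' Icc l r).Nontrivial) :
    ∃ u v, u < v ∧ Icc u v ⊆ Icc b₁ b₂ ∧ Icc u v ∩ Icc l r ⊆ {l, r} ∧
      f '' Icc u v = f '' Icc l r := by
  have hTB : f '' Icc l r ⊆ f '' Icc b₁ b₂ := hAB ▸ image_mono hTA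
  rw [hfT.image_Icc hlr] at hnt hTB ⊢
  obtain ⟨u, v, huv, hsub, himg⟩ :=
    hfB.exists_Icc_subset_image_eq (nontrivial_Icc_iff.1 hnt) hTB
  refine ⟨u, v, huv, hsub, ?_, himg⟩
  calc Icc u v ∩ Icc l r ⊆ Icc l r ∩ Icc b₁ b₂ := fun x hx => ⟨hx.2, hsub hx.1⟩
    _ ⊆ {l, r} := Icc_inter_Icc_subset_pair hb (hABcap.anti (inter_subset_inter_left _ hTA))

theorem stmt_0_general (f : ℝ → ℝ) (hf : ContinuousOn f (Icc 0 1))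
    (hsurj : f '' Icc 0 1 = Icc 0 1)
    (k : ℕ) (hk : 0 < k) (a₁ a₂ b₁ b₂ d₁ d₂ : ℝ)
    (hA : Icc a₁ a₂ ⊆ Icc 0 1) (hB : Icc b₁ b₂ ⊆ Icc 0 1)
    (hAB : f '' Icc a₁ a₂ = f '' Icc b₁ b₂)
    (hABcap : (Icc a₁ a₂ ∩ Icc b₁ b₂).Subsingleton)
    (hd : d₁ < d₂) (hDA : Icc d₁ d₂ ⊆ Icc a₁ a₂)
    (hDk : f^[k] '' Icc d₁ d₂ = Icc a₁ a₂) :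
    SplittingSeq f := by
  have hD01 : Icc d₁ d₂ ⊆ Icc 0 1 := hDA.trans hA
  have hDself : Icc d₁ d₂ ⊆ f^[k] '' Icc d₁ d₂ := hDk ▸ hDA
  have hb : b₁ < b₂ := by
    have hfD := ((nontrivial_Icc_iff.2 hd).mono hDself).image_of_image_iterate hk
    exact nontrivial_Icc_iff.1 (nontrivial_of_image f _ (hAB ▸ hfD.mono (image_mono hDA)))
  have hA01 : Icc a₁ a₂ ≠ Icc 0 1 := fun h =>
    (nontrivial_Icc_iff.2 hb).not_subsingleton (hABcap.anti fun x hx => ⟨h ▸ hB hx, hx⟩)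
  have hfk := (hf.iterate (fun _ hx => hsurj ▸ mem_image_of_mem f hx) k).mono hD01
  obtain ⟨u, v, rfl, rfl, huv, hsubD, hself, hback⟩ := hfk.exists_seq_Icc_image_succ_eq hd hDself
  obtain ⟨l, r, htight, hlr⟩ := exists_isTightSeq_interpolateIterates hf hsurj hk huv
    (fun j => (hsubD j).trans hD01) hself hback (hDk ▸ hA01)
  choose su sv hS using fun j => exists_splitting_Icc (hf.mono hB)
    (hf.mono ((hsubD j).trans hD01)) (huv j).le hb hAB hABcap ((hsubD j).trans hDA)
    (((nontrivial_Icc_iff.2 (huv j)).mono (hself j)).image_of_image_iterate hk)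
  refine ⟨l, r, range fun j => (j + 1) * k, fun n => Icc (su (n / k - 1)) (sv (n / k - 1)),
    htight.isSplittingSeq (infinite_range_of_injective fun i j h => ?_) ?_⟩
  · simpa [hk.ne'] using h
  rintro _ ⟨j, rfl⟩
  obtain ⟨hlt, hsub, hcap, himg⟩ := hS j
  rw [(hlr j).1, (hlr j).2, Nat.mul_div_cancel _ hk, Nat.add_sub_cancel]
  exact ⟨⟨_, _, hlt, rfl⟩, hsub.trans hB, hcap, himg⟩

theorem stmt_0 (f : ℝ → ℝ) (hf : ContinuousOn f (Icc 0 1))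
    (hsurj : f '' Icc 0 1 = Icc 0 1)
    (k : ℕ) (hk : 0 < k) (a₁ a₂ b₁ b₂ d₁ d₂ : ℝ)
    (hA : Icc a₁ a₂ ⊆ Icc 0 1) (hB : Icc b₁ b₂ ⊆ Icc 0 1)
    (ha : a₁ < a₂) (hb : b₁ ≤ b₂)
    (hAB : f '' Icc a₁ a₂ = f '' Icc b₁ b₂)
    (hABcap : (Icc a₁ a₂ ∩ Icc b₁ b₂).Subsingleton)
    (hd : d₁ < d₂) (hDA : Icc d₁ d₂ ⊆ Icc a₁ a₂)
    (hDk : f^[k] '' Icc d₁ d₂ = Icc a₁ a₂) :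
    SplittingSeq f :=
  stmt_0_general f hf hsurj k hk a₁ a₂ b₁ b₂ d₁ d₂ hA hB hAB hABcap hd hDA hDk
end

section
/- Let f : [0,1] → [0,1] be continuous and surjective. If f admits a periodic point of period m for some m > 2, then f admits a splitting sequence. -/
open Set Filter Topology

/-!
The orbit `P` of `x` has at least three points and `f` permutes it cyclically, without points
of period one or two. Hence some `c ∈ P`, neither the least nor the greatest point of `P`, is
mapped to an extreme point of `P`. If `c₁ < c < c₂` are the neighbours of `c` in `P`, the laps
`[c₁, c]` and `[c, c₂]` are both folded by `f` over an interval `K` with endpoints in `P`.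
Following the orbit, some `f^[n] K` contains `c` together with another point of `P`, hence a
whole lap `A`; the other lap `B` meets `A` only at `c`. Pulling back interval by interval along
the covering loop `K → f K → ⋯ → f^[n] K ⊇ A → K` gives a tight sequence, and at every pass
through `A` the pullback through `B` instead gives a splitting interval.
-/

open Function

theorem Nat.add_one_mod_add_one (j n : ℕ) :
    (j + 1) % (n + 1) = if j % (n + 1) = n then 0 else j % (n + 1) + 1 := by
  have hlt : j % (n + 1) < n + 1 := Nat.mod_lt j (by omega)
  conv_lhs => rw [← Nat.div_add_mod j (n + 1), add_assoc, Nat.mul_add_mod]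
  split_ifs with h
  · rw [h, Nat.mod_self]
  · exact Nat.mod_eq_of_lt (by omega)

theorem ContinuousOn.exists_Icc_image_eq_Icc {f : ℝ → ℝ} {a b : ℝ} (hab : a ≤ b)
    (hf : ContinuousOn f (Icc a b)) (hfab : f a ≤ f b) :
    ∃ p q, Icc p q ⊆ Icc a b ∧ f '' Icc p q = Icc (f a) (f b) := by
  -- `p` is the last visit of `f` to the value `f a`, and `q` the first visit to `f b` after `p`
  obtain ⟨p, ⟨hp, hfpa⟩, hp_max⟩ : ∃ p, IsGreatest (Icc a b ∩ f ⁻¹' {f a}) p :=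
    (isCompact_Icc.of_isClosed_subset
      (hf.preimage_isClosed_of_isClosed isClosed_Icc isClosed_singleton)
      inter_subset_left).exists_isGreatest ⟨a, left_mem_Icc.2 hab, rfl⟩
  obtain ⟨q, ⟨hq, hfqb⟩, hq_min⟩ : ∃ q, IsLeast (Icc p b ∩ f ⁻¹' {f b}) q :=
    (isCompact_Icc.of_isClosed_subset
      ((hf.mono (Icc_subset_Icc_left hp.1)).preimage_isClosed_of_isClosed isClosed_Icc
        isClosed_singleton) inter_subset_left).exists_isLeast ⟨b, right_mem_Icc.2 hp.2, rfl⟩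
  have hfp : f p = f a := hfpa
  have hfq : f q = f b := hfqb
  have hpq : Icc p q ⊆ Icc a b := Icc_subset_Icc hp.1 hq.2
  refine ⟨p, q, hpq, Subset.antisymm ?_ ?_⟩
  · rintro _ ⟨z, hz, rfl⟩
    constructor
    · by_contra! hlt
      obtain ⟨y, hy, hfy⟩ := intermediate_value_Icc hz.2
        (hf.mono ((Icc_subset_Icc_left hz.1).trans hpq)) ⟨hlt.le, hfq ▸ hfab⟩
      have hyp : y ≤ p := hp_max ⟨hpq ⟨hz.1.trans hy.1, hy.2⟩, hfy⟩
      have hzp : z = p := le_antisymm (hy.1.trans hyp) hz.1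
      exact hlt.ne (hzp ▸ hfp)
    · by_contra! hgt
      obtain ⟨y, hy, hfy⟩ := intermediate_value_Icc hz.1
        (hf.mono ((Icc_subset_Icc_right hz.2).trans hpq)) ⟨hfp ▸ hfab, hgt.le⟩
      have hqy : q ≤ y := hq_min ⟨⟨hy.1, hy.2.trans (hz.2.trans hq.2)⟩, hfy⟩
      have hzq : z = q := le_antisymm hz.2 (hqy.trans hy.2)
      exact hgt.ne' (hzq ▸ hfq)
  · simpa only [hfp, hfq] using intermediate_value_Icc hq.1 (hf.mono hpq)

theorem ContinuousOn.exists_Icc_subset_image_eq_s1 {f : ℝ → ℝ} {I : Set ℝ}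
    (hf : ContinuousOn f I) (hI : I.OrdConnected) {s t : ℝ} (hst : s < t)
    (h : Icc s t ⊆ f '' I) : ∃ p q, p < q ∧ Icc p q ⊆ I ∧ f '' Icc p q = Icc s t := by
  suffices ∃ p q, Icc p q ⊆ I ∧ f '' Icc p q = Icc s t by
    obtain ⟨p, q, hpq, himg⟩ := this
    refine ⟨p, q, lt_of_not_ge fun hqp => hst.ne ?_, hpq, himg⟩
    have hsub := (subsingleton_Icc_of_ge hqp).image f
    rw [himg] at hsub
    exact hsub (left_mem_Icc.2 hst.le) (right_mem_Icc.2 hst.le)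
  obtain ⟨a, ha, rfl⟩ := h (left_mem_Icc.2 hst.le)
  obtain ⟨b, hb, rfl⟩ := h (right_mem_Icc.2 hst.le)
  rcases le_total a b with hab | hba
  · obtain ⟨p, q, hpq, himg⟩ := (hf.mono (hI.out ha hb)).exists_Icc_image_eq_Icc hab hst.le
    exact ⟨p, q, hpq.trans (hI.out ha hb), himg⟩
  · obtain ⟨p, q, hpq, himg⟩ :=
      (hf.mono (hI.out hb ha)).neg.exists_Icc_image_eq_Icc hba (neg_le_neg hst.le)
    refine ⟨p, q, hpq.trans (hI.out hb ha), ?_⟩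
    have hneg : f '' Icc p q = -((-f) '' Icc p q) := by
      rw [← image_neg_eq_neg, image_image]
      simp
    rw [hneg, himg, neg_Icc]
    simp

theorem exists_tight_seq {f : ℝ → ℝ} {I : ℕ → Set ℝ} (hI : ∀ j, (I j).OrdConnected)
    (hf : ∀ j, ContinuousOn f (I j)) (hcov : ∀ j, I j ⊆ f '' I (j + 1))
    (hI₀ : (I 0).Nontrivial) :
    ∃ l r : ℕ → ℝ, ∀ j, l j < r j ∧ Icc (l j) (r j) ⊆ I j ∧
      f '' Icc (l (j + 1)) (r (j + 1)) = Icc (l j) (r j) := by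
  -- stated for every pair, so that `choose` gives a total successor function
  have step : ∀ j (e : ℝ × ℝ), ∃ e' : ℝ × ℝ, e.1 < e.2 → Icc e.1 e.2 ⊆ I j →
      e'.1 < e'.2 ∧ Icc e'.1 e'.2 ⊆ I (j + 1) ∧ f '' Icc e'.1 e'.2 = Icc e.1 e.2 := by
    intro j e
    by_cases h : e.1 < e.2 ∧ Icc e.1 e.2 ⊆ I j
    · obtain ⟨p, q, hpq, hsub, himg⟩ :=
        (hf (j + 1)).exists_Icc_subset_image_eq_s1 (hI (j + 1)) h.1 (h.2.trans (hcov j))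
      exact ⟨(p, q), fun _ _ => ⟨hpq, hsub, himg⟩⟩
    · exact ⟨e, fun h₁ h₂ => absurd ⟨h₁, h₂⟩ h⟩
  choose g hg using step
  obtain ⟨a, ha, b, hb, hab⟩ := hI₀.exists_lt
  let e : ℕ → ℝ × ℝ := fun j => Nat.rec (motive := fun _ => ℝ × ℝ) (a, b) g j
  have he : ∀ j, (e j).1 < (e j).2 ∧ Icc (e j).1 (e j).2 ⊆ I j := by
    intro j
    induction j with
    | zero => exact ⟨hab, (hI 0).out ha hb⟩
    | succ j ih => exact ⟨(hg j (e j) ih.1 ih.2).1, (hg j (e j) ih.1 ih.2).2.1⟩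
  exact ⟨fun j => (e j).1, fun j => (e j).2,
    fun j => ⟨(he j).1, (he j).2, (hg j (e j) (he j).1 (he j).2).2.2⟩⟩

theorem splittingSeq_of_itinerary {f : ℝ → ℝ} (hf : ContinuousOn f (Icc 0 1))
    (hsurj : f '' Icc 0 1 = Icc 0 1) {I : ℕ → Set ℝ} (hI : ∀ j, (I j).OrdConnected)
    (hI01 : ∀ j, I j ⊆ Icc 0 1) (hcov : ∀ j, I j ⊆ f '' I (j + 1)) (hI₀ : (I 0).Nontrivial)
    (hI₀_ne : I 0 ≠ Icc 0 1) {B : Set ℝ} (hB : B.OrdConnected) (hB01 : B ⊆ Icc 0 1)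
    {M : Set ℕ} (hM : M.Infinite)
    (hMB : ∀ n ∈ M, I n ⊆ f '' B ∧ Disjoint (interior (I (n + 1))) B) :
    SplittingSeq f := by
  obtain ⟨l, r, hT⟩ := exists_tight_seq hI (fun j => hf.mono (hI01 j)) hcov hI₀
  have hproper : ∀ j, Icc (l j) (r j) ≠ Icc 0 1 := by
    intro j
    induction j with
    | zero => exact fun h => hI₀_ne ((hI01 0).antisymm (h ▸ (hT 0).2.1))
    | succ j ih => exact fun h => ih (by rw [← (hT j).2.2, h, hsurj])
  have hsplit : ∀ n ∈ M, ∃ u v, u < v ∧ Icc u v ⊆ B ∧ f '' Icc u v = Icc (l n) (r n) :=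
    fun n hn => (hf.mono hB01).exists_Icc_subset_image_eq_s1 hB (hT n).1
      ((hT n).2.1.trans (hMB n hn).1)
  choose! u v huv hsub himg using hsplit
  refine ⟨l, r, (· + 1) '' M, fun j => Icc (u (j - 1)) (v (j - 1)), fun j => (hT j).1.le,
    fun j => (hT j).2.1.trans (hI01 j), hproper, fun j => (hT j).2.2, ⟨0, fun j _ => (hT j).1⟩,
    hM.image (add_left_injective 1).injOn, ?_⟩
  rintro _ ⟨n, hn, rfl⟩
  simp only [Nat.add_sub_cancel]
  refine ⟨⟨_, _, huv n hn, rfl⟩, (hsub n hn).trans hB01, ?_, by rw [himg n hn, (hT n).2.2]⟩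
  rintro w ⟨hwS, hwT⟩
  have hw : w ∉ Ioo (l (n + 1)) (r (n + 1)) := fun hw' => (hMB n hn).2.ne_of_mem
    (interior_mono (hT (n + 1)).2.1 (by rwa [interior_Icc])) (hsub n hn hwS) rfl
  rw [← Icc_sdiff_Ioo_same (hT (n + 1)).1.le]
  exact ⟨hwT, hw⟩

theorem Set.OrdConnected.image_iterate {f : ℝ → ℝ} {s K : Set ℝ} (hf : ContinuousOn f s)
    (hmaps : MapsTo f s s) (hK : K.OrdConnected) (hKs : K ⊆ s) (n : ℕ) :
    (f^[n] '' K).OrdConnected :=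
  (hK.isPreconnected.image _ ((hf.iterate hmaps n).mono hKs)).ordConnected

theorem splittingSeq_of_loop {f : ℝ → ℝ} (hf : ContinuousOn f (Icc 0 1))
    (hsurj : f '' Icc 0 1 = Icc 0 1) {K A B : Set ℝ} (hK : K.OrdConnected)
    (hK01 : K ⊆ Icc 0 1) (hA : A.OrdConnected) (hA01 : A ⊆ Icc 0 1) (hA_nt : A.Nontrivial)
    (hA_ne : A ≠ Icc 0 1) (hB : B.OrdConnected) (hB01 : B ⊆ Icc 0 1)
    (hAB : Disjoint (interior A) B) (hKA : K ⊆ f '' A) (hKB : K ⊆ f '' B) {n : ℕ}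
    (hAK : A ⊆ f^[n] '' K) : SplittingSeq f := by
  have hmaps : MapsTo f (Icc 0 1) (Icc 0 1) := mapsTo_iff_image_subset.2 hsurj.subset
  -- the periodic itinerary `A, f^[n-1] K, …, f K, K, A, …`
  let I : ℕ → Set ℝ := fun j => if j % (n + 1) = 0 then A else f^[n - j % (n + 1)] '' K
  have hIK : ∀ j, I j ⊆ f^[n - j % (n + 1)] '' K := by
    intro j
    by_cases h : j % (n + 1) = 0
    · simpa [I, h] using hAK
    · simp [I, h]
  refine splittingSeq_of_itinerary hf hsurj (I := I) (fun j => ?_) (fun j => ?_) (fun j => ?_)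
    (by simpa [I] using hA_nt) (by simpa [I] using hA_ne) hB hB01
    (M := {j | j % (n + 1) = n}) ?_ fun j hj => ?_
  · by_cases h : j % (n + 1) = 0
    · simpa [I, h] using hA
    · simpa [I, h] using hK.image_iterate hf hmaps hK01 _
  · by_cases h : j % (n + 1) = 0
    · simpa [I, h] using hA01
    · simpa [I, h] using ((hmaps.iterate _).mono_left hK01).image_subset
  · by_cases h : j % (n + 1) = n
    · have hj1 : I (j + 1) = A := by simp [I, Nat.add_one_mod_add_one, h]
      rw [hj1]
      exact (hIK j).trans (by simpa [h] using hKA)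
    · have hj1 : I (j + 1) = f^[n - (j % (n + 1) + 1)] '' K := by
        simp [I, Nat.add_one_mod_add_one, h]
      have hlt : j % (n + 1) < n + 1 := Nat.mod_lt j (by omega)
      have hsucc : n - j % (n + 1) = n - (j % (n + 1) + 1) + 1 := by omega
      rw [hj1, ← image_comp, ← iterate_succ', Nat.succ_eq_add_one, ← hsucc]
      exact hIK j
  · exact Nat.frequently_atTop_iff_infinite.1 (Nat.frequently_mod_eq n.lt_succ_self)
  · have hj' : j % (n + 1) = n := hj
    have hj1 : I (j + 1) = A := by simp [I, Nat.add_one_mod_add_one, hj']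
    exact ⟨(hIK j).trans (by simpa [hj'] using hKB), hj1 ▸ hAB⟩

theorem Set.uIcc_subset_uIcc_or {α : Type*} [LinearOrder α] {a b x : α}
    (h : (a ≤ x ∧ b ≤ x) ∨ (x ≤ a ∧ x ≤ b)) : uIcc a x ⊆ uIcc b x ∨ uIcc b x ⊆ uIcc a x := by
  rcases le_total a b with hab | hba <;> rcases h with ⟨ha, hb⟩ | ⟨ha, hb⟩
  · exact .inr (uIcc_subset_uIcc (mem_uIcc_of_le hab hb) right_mem_uIcc)
  · exact .inl (uIcc_subset_uIcc (mem_uIcc_of_ge ha hab) right_mem_uIcc)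
  · exact .inl (uIcc_subset_uIcc (mem_uIcc_of_le hba ha) right_mem_uIcc)
  · exact .inr (uIcc_subset_uIcc (mem_uIcc_of_ge hb hba) right_mem_uIcc)

theorem exists_interior_extremal_point {α : Type*} [LinearOrder α] {f : α → α} {P : Set α}
    (hP : P.Finite) (hne : P.Nonempty) (hmaps : MapsTo f P P) (hsurj : SurjOn f P P)
    (hno2 : ∀ y ∈ P, f (f y) ≠ y) :
    ∃ c ∈ P, (∃ y ∈ P, y < c) ∧ (∃ y ∈ P, c < y) ∧
      ((∀ y ∈ P, f y ≤ f c) ∨ (∀ y ∈ P, f c ≤ f y)) := by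
  obtain ⟨lo, hlo, hlo_min⟩ := P.exists_min_image id hP hne
  obtain ⟨hi, hhi, hhi_max⟩ := P.exists_max_image id hP hne
  obtain ⟨a, ha, hfa⟩ := hsurj hhi
  obtain ⟨b, hb, hfb⟩ := hsurj hlo
  have hno1 : ∀ y ∈ P, f y ≠ y := fun y hy hfy => hno2 y hy (by rw [hfy, hfy])
  by_cases hab : a = lo
  · subst hab
    refine ⟨b, hb, ⟨a, ha, (hlo_min b hb).lt_of_ne fun h => hno1 b hb (hfb.trans h)⟩,
      ⟨hi, hhi, (hhi_max b hb).lt_of_ne fun h => hno2 a ha ?_⟩,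
      .inr fun y hy => hfb ▸ hlo_min _ (hmaps hy)⟩
    rw [hfa, ← show b = hi from h, hfb]
  · exact ⟨a, ha, ⟨lo, hlo, (hlo_min a ha).lt_of_ne' hab⟩,
      ⟨hi, hhi, (hhi_max a ha).lt_of_ne fun h => hno1 a ha (hfa.trans h.symm)⟩,
      .inl fun y hy => hfa ▸ hhi_max _ (hmaps hy)⟩

theorem exists_iterate_image_superset {α : Type*} [LinearOrder α] {f : α → α} {P K : Set α}
    (hmaps : MapsTo f P P) (hinj : InjOn f P) (hreach : ∀ y ∈ P, ∀ z ∈ P, ∃ t, f^[t] y = z)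
    (hK : ∀ n, (f^[n] '' K).OrdConnected) {k k' : α} (hk : k ∈ P ∩ K) (hk' : k' ∈ P ∩ K)
    (hkk' : k ≠ k') {c c₁ c₂ : α} (hc : c ∈ P) (hgap : ∀ y ∈ P, y ≠ c → y ≤ c₁ ∨ c₂ ≤ y) :
    ∃ n, Icc c₁ c ⊆ f^[n] '' K ∨ Icc c c₂ ⊆ f^[n] '' K := by
  obtain ⟨t, rfl⟩ := hreach k hk.1 c hc
  have hne : f^[t] k' ≠ f^[t] k := fun h => hkk' (hinj.iterate hmaps t hk.1 hk'.1 h.symm)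
  have hcW := mem_image_of_mem f^[t] hk.2
  have hyW := mem_image_of_mem f^[t] hk'.2
  refine ⟨t, (hgap _ (hmaps.iterate t hk'.1) hne).imp (fun h => ?_) (fun h => ?_)⟩
  · exact (Icc_subset_Icc_left h).trans ((hK t).out hyW hcW)
  · exact (Icc_subset_Icc_right h).trans ((hK t).out hcW hyW)

theorem splittingSeq_of_interior_extremal_point {f : ℝ → ℝ} (hf : ContinuousOn f (Icc 0 1))
    (hsurj : f '' Icc 0 1 = Icc 0 1) {P : Set ℝ} (hP : P.Finite) (hP01 : P ⊆ Icc 0 1)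
    (hmaps : MapsTo f P P) (hinj : InjOn f P) (hreach : ∀ y ∈ P, ∀ z ∈ P, ∃ t, f^[t] y = z)
    {c : ℝ} (hc : c ∈ P) (hlow : ∃ y ∈ P, y < c) (hhigh : ∃ y ∈ P, c < y)
    (hext : (∀ y ∈ P, f y ≤ f c) ∨ (∀ y ∈ P, f c ≤ f y)) : SplittingSeq f := by
  obtain ⟨c₁, ⟨hc₁, hc₁c⟩, hc₁_max⟩ :=
    {y ∈ P | y < c}.exists_max_image id (hP.subset (sep_subset _ _)) hlow
  obtain ⟨c₂, ⟨hc₂, hcc₂⟩, hc₂_min⟩ :=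
    {y ∈ P | c < y}.exists_min_image id (hP.subset (sep_subset _ _)) hhigh
  have hgap : ∀ y ∈ P, y ≠ c → y ≤ c₁ ∨ c₂ ≤ y := fun y hy hyc =>
    hyc.lt_or_gt.imp (fun h => hc₁_max y ⟨hy, h⟩) (fun h => hc₂_min y ⟨hy, h⟩)
  have hA01 : Icc c₁ c ⊆ Icc 0 1 := Icc_subset_Icc (hP01 hc₁).1 (hP01 hc).2
  have hB01 : Icc c c₂ ⊆ Icc 0 1 := Icc_subset_Icc (hP01 hc).1 (hP01 hc₂).2
  -- `k` is whichever of `f c₁`, `f c₂` lies nearer to the extreme value `f c`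
  obtain ⟨k, hk, hkc, hKA, hKB⟩ : ∃ k ∈ P, k ≠ f c ∧
      uIcc k (f c) ⊆ f '' Icc c₁ c ∧ uIcc k (f c) ⊆ f '' Icc c c₂ := by
    have hA : uIcc (f c₁) (f c) ⊆ f '' Icc c₁ c := by
      rw [← uIcc_of_le hc₁c.le] at hA01 ⊢
      exact intermediate_value_uIcc (hf.mono hA01)
    have hB : uIcc (f c₂) (f c) ⊆ f '' Icc c c₂ := by
      rw [uIcc_comm]
      rw [← uIcc_of_le hcc₂.le] at hB01 ⊢
      exact intermediate_value_uIcc (hf.mono hB01)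
    rcases uIcc_subset_uIcc_or (hext.imp (fun h => ⟨h c₁ hc₁, h c₂ hc₂⟩)
      (fun h => ⟨h c₁ hc₁, h c₂ hc₂⟩)) with h | h
    · exact ⟨f c₁, hmaps hc₁, fun e => hc₁c.ne (hinj hc₁ hc e), hA, h.trans hB⟩
    · exact ⟨f c₂, hmaps hc₂, fun e => hcc₂.ne' (hinj hc₂ hc e), h.trans hA, hB⟩
  have hmaps01 : MapsTo f (Icc 0 1) (Icc 0 1) := mapsTo_iff_image_subset.2 hsurj.subset
  have hK01 : uIcc k (f c) ⊆ Icc 0 1 := ordConnected_Icc.uIcc_subset (hP01 hk) (hP01 (hmaps hc))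
  have hc₂A : c₂ ∉ Icc c₁ c := fun h => h.2.not_gt hcc₂
  have hc₁B : c₁ ∉ Icc c c₂ := fun h => h.1.not_gt hc₁c
  obtain ⟨n, hn | hn⟩ := exists_iterate_image_superset hmaps hinj hreach
    (ordConnected_uIcc.image_iterate hf hmaps01 hK01) ⟨hk, left_mem_uIcc⟩
    ⟨hmaps hc, right_mem_uIcc⟩ hkc hc hgap
  · refine splittingSeq_of_loop hf hsurj ordConnected_uIcc hK01 ordConnected_Icc hA01
      ⟨c₁, left_mem_Icc.2 hc₁c.le, c, right_mem_Icc.2 hc₁c.le, hc₁c.ne⟩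
      (fun h => hc₂A (h ▸ hP01 hc₂)) ordConnected_Icc hB01 ?_ hKA hKB hn
    rw [interior_Icc]
    exact disjoint_left.2 fun y hy hy' => hy.2.not_ge hy'.1
  · refine splittingSeq_of_loop hf hsurj ordConnected_uIcc hK01 ordConnected_Icc hB01
      ⟨c, left_mem_Icc.2 hcc₂.le, c₂, right_mem_Icc.2 hcc₂.le, hcc₂.ne⟩
      (fun h => hc₁B (h ▸ hP01 hc₁)) ordConnected_Icc hA01 ?_ hKB hKA hn
    rw [interior_Icc]
    exact disjoint_left.2 fun y hy hy' => hy.1.not_ge hy'.2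

namespace Function.IsPeriodicPt

variable {α : Type*} {f : α → α} {x : α} {m : ℕ}

theorem finite_range_iterate (hx : IsPeriodicPt f m x) (hm : 0 < m) :
    (range fun n => f^[n] x).Finite :=
  ((finite_Iio m).image fun n => f^[n] x).subset
    (range_subset_iff.2 fun n => ⟨n % m, Nat.mod_lt n hm, hx.iterate_mod_apply n⟩)

theorem injOn_range_iterate (hx : IsPeriodicPt f m x) (hm : 0 < m) :
    InjOn f (range fun n => f^[n] x) := by
  have hinv : ∀ n, f^[m - 1] (f (f^[n] x)) = f^[n] x := fun n => by
    rw [← iterate_succ_apply, Nat.succ_eq_add_one, Nat.sub_add_cancel hm]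
    exact hx.apply_iterate n
  rintro _ ⟨i, rfl⟩ _ ⟨j, rfl⟩ h
  dsimp only at h ⊢
  rw [← hinv i, h, hinv j]

theorem exists_iterate_eq_of_mem_range (hx : IsPeriodicPt f m x) (hm : 0 < m) {y z : α}
    (hy : y ∈ range fun n => f^[n] x) (hz : z ∈ range fun n => f^[n] x) :
    ∃ t, f^[t] y = z := by
  obtain ⟨i, rfl⟩ := hy
  obtain ⟨j, rfl⟩ := hz
  refine ⟨j + m * i - i, ?_⟩
  rw [← iterate_add_apply, Nat.sub_add_cancel (by nlinarith), iterate_add_apply,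
    (hx.mul_const i).eq]

end Function.IsPeriodicPt

theorem mapsTo_range_iterate {α : Type*} (f : α → α) (x : α) :
    MapsTo f (range fun n => f^[n] x) (range fun n => f^[n] x) := by
  rintro _ ⟨n, rfl⟩
  exact ⟨n + 1, iterate_succ_apply' f n x⟩

theorem stmt_1 (f : ℝ → ℝ) (hf : ContinuousOn f (Icc 0 1))
    (hsurj : f '' Icc 0 1 = Icc 0 1)
    (x : ℝ) (hx : x ∈ Icc (0:ℝ) 1) (m : ℕ) (hm : 2 < m)
    (hper : f^[m] x = x) (hminper : ∀ j, 0 < j → j < m → f^[j] x ≠ x) :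
    SplittingSeq f := by
  have hper' : IsPeriodicPt f m x := hper
  have hm0 : 0 < m := by omega
  set P := range fun n => f^[n] x
  have hfin := hper'.finite_range_iterate hm0
  have hmaps := mapsTo_range_iterate f x
  have hinj := hper'.injOn_range_iterate hm0
  have hreach : ∀ y ∈ P, ∀ z ∈ P, ∃ t, f^[t] y = z := fun y hy z hz =>
    hper'.exists_iterate_eq_of_mem_range hm0 hy hz
  have hno2 : ∀ y ∈ P, f (f y) ≠ y := fun y hy hyy => by
    obtain ⟨t, ht⟩ := hreach y hy x ⟨0, rfl⟩
    refine hminper 2 two_pos hm ?_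
    rw [← ht, ← iterate_add_apply, add_comm, iterate_add_apply]
    exact congrArg f^[t] hyy
  obtain ⟨c, hc, hlow, hhigh, hext⟩ := exists_interior_extremal_point hfin ⟨x, 0, rfl⟩ hmaps
    ((hfin.injOn_iff_bijOn_of_mapsTo hmaps).1 hinj).surjOn hno2
  exact splittingSeq_of_interior_extremal_point hf hsurj hfin
    (range_subset_iff.2 fun n => (mapsTo_iff_image_subset.2 hsurj.subset).iterate n hx)
    hmaps hinj hreach hc hlow hhigh hext
end

section
/- Let f : [0,1] → [0,1] be continuous, surjective, and not admitting a splitting sequence. If f admits two 2-cycles {s, t} and {u, v} with s < t and u < v, then either s < u and v < t, or u < s and t < v (i.e., the intervals [s,t] and [u,v] are nested). -/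
/-!
Two non-nested 2-cycles `{s, t}` and `{u, v}` with `s < u` are either linked (`s < u < t < v`)
or disjoint (`s < t < u < v`). Either way there are closed intervals `A`, `B`, `C` with
`f(A) ⊇ B`, `f(B) ⊇ A`, `f(C) ⊇ A` and `C` meeting `B` only at an endpoint: in the linked case
`A = [s, u]`, `B = [t, v]`, `C = [u, t]`, in the disjoint case `A = B = [s, t]`, `C = [t, u]`.
Pulling `A` back alternately through `B` and `A` yields a tight sequence `T_n`, and at every odd
time `T_n ⊆ B` is split by a pull-back of `T_{n-1} ⊆ A` inside `C`.
-/

open Set Filter Topology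

lemma lt_of_image_Icc_eq_Icc {f : ℝ → ℝ} {a b p q : ℝ} (hpq : p < q)
    (h : f '' Icc a b = Icc p q) : a < b := by
  by_contra! hba
  have hsub := (subsingleton_Icc_of_ge hba).image f
  rw [h] at hsub
  exact hpq.ne (hsub (left_mem_Icc.2 hpq.le) (right_mem_Icc.2 hpq.le))

lemma exists_image_Icc_eq_Icc_of_apply_eq {f : ℝ → ℝ} {x y p q : ℝ} (hxy : x ≤ y)
    (hf : ContinuousOn f (Icc x y)) (hfx : f x = p) (hfy : f y = q) (hpq : p ≤ q) :
    ∃ a b, x ≤ a ∧ a ≤ b ∧ b ≤ y ∧ f '' Icc a b = Icc p q := by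
  -- `b` is the first time `f` hits `q`, and `a` the last time before `b` that `f` hits `p`
  obtain ⟨b, ⟨⟨hxb, hby⟩, hfb⟩, hb_min⟩ :=
    (isCompact_Icc.of_isClosed_subset (hf.preimage_isClosed_of_isClosed isClosed_Icc
      (isClosed_singleton (x := q))) inter_subset_left).exists_isLeast
      ⟨y, mem_inter (right_mem_Icc.2 hxy) hfy⟩
  have hfxb : ContinuousOn f (Icc x b) := hf.mono (Icc_subset_Icc_right hby)
  obtain ⟨a, ⟨⟨hxa, hab⟩, hfa⟩, ha_max⟩ :=
    (isCompact_Icc.of_isClosed_subset (hfxb.preimage_isClosed_of_isClosed isClosed_Icc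
      (isClosed_singleton (x := p))) inter_subset_left).exists_isGreatest
      ⟨x, mem_inter (left_mem_Icc.2 hxb) hfx⟩
  rw [mem_preimage, mem_singleton_iff] at hfa hfb
  refine ⟨a, b, hxa, hab, hby, Subset.antisymm ?_ ?_⟩
  · rintro _ ⟨z, ⟨haz, hzb⟩, rfl⟩
    constructor
    · by_contra! hlt
      obtain ⟨w, ⟨hzw, hwb⟩, hfw⟩ := intermediate_value_Icc hzb
        (hfxb.mono (Icc_subset_Icc_left (hxa.trans haz))) ⟨hlt.le, hfb ▸ hpq⟩
      have hwa : w ≤ a := ha_max ⟨⟨hxa.trans (haz.trans hzw), hwb⟩, hfw⟩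
      obtain rfl : z = w := le_antisymm hzw (hwa.trans haz)
      exact hlt.ne hfw
    · by_contra! hlt
      obtain ⟨w, ⟨haw, hwz⟩, hfw⟩ := intermediate_value_Icc haz
        (hfxb.mono (Icc_subset_Icc hxa hzb)) ⟨hfa ▸ hpq, hlt.le⟩
      have hbw : b ≤ w := hb_min ⟨⟨hxa.trans haw, (hwz.trans hzb).trans hby⟩, hfw⟩
      obtain rfl : z = w := le_antisymm (hzb.trans hbw) hwz
      exact hlt.ne' hfw
  · simpa only [hfa, hfb] using
      intermediate_value_Icc hab (hfxb.mono (Icc_subset_Icc_left hxa))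

lemma exists_image_Icc_eq_Icc {f : ℝ → ℝ} {c d p q : ℝ} (hf : ContinuousOn f (Icc c d))
    (hpq : p ≤ q) (hcov : Icc p q ⊆ f '' Icc c d) :
    ∃ a b, c ≤ a ∧ a ≤ b ∧ b ≤ d ∧ f '' Icc a b = Icc p q := by
  obtain ⟨x, ⟨hcx, hxd⟩, hfx⟩ := hcov (left_mem_Icc.2 hpq)
  obtain ⟨y, ⟨hcy, hyd⟩, hfy⟩ := hcov (right_mem_Icc.2 hpq)
  rcases le_total x y with hxy | hyx
  · obtain ⟨a, b, hxa, hab, hby, himg⟩ := exists_image_Icc_eq_Icc_of_apply_eq hxy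
      (hf.mono (Icc_subset_Icc hcx hyd)) hfx hfy hpq
    exact ⟨a, b, hcx.trans hxa, hab, hby.trans hyd, himg⟩
  · obtain ⟨a, b, hya, hab, hbx, himg⟩ :=
      exists_image_Icc_eq_Icc_of_apply_eq (f := fun z => -f z) hyx
        (hf.mono (Icc_subset_Icc hcy hxd)).neg (by rw [hfy]) (by rw [hfx]) (neg_le_neg hpq)
    refine ⟨a, b, hcy.trans hya, hab, hbx.trans hxd, ?_⟩
    have hneg : f '' Icc a b = -((fun z => -f z) '' Icc a b) := by
      rw [← image_neg_eq_neg, image_image]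
      simp only [neg_neg]
    rw [hneg, himg, neg_Icc, neg_neg, neg_neg]

lemma exists_seq_image_Icc_eq_Icc {f : ℝ → ℝ} {a b : ℕ → ℝ}
    (hf : ∀ n, ContinuousOn f (Icc (a n) (b n))) (h0 : a 0 < b 0)
    (hcov : ∀ n, Icc (a n) (b n) ⊆ f '' Icc (a (n + 1)) (b (n + 1))) :
    ∃ l r : ℕ → ℝ, (∀ n, a n ≤ l n ∧ l n < r n ∧ r n ≤ b n) ∧
      ∀ n, f '' Icc (l (n + 1)) (r (n + 1)) = Icc (l n) (r n) := by
  have step : ∀ n (I : ℝ × ℝ), ∃ J : ℝ × ℝ, (a n ≤ I.1 ∧ I.1 < I.2 ∧ I.2 ≤ b n) →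
      (a (n + 1) ≤ J.1 ∧ J.1 < J.2 ∧ J.2 ≤ b (n + 1)) ∧ f '' Icc J.1 J.2 = Icc I.1 I.2 := by
    intro n I
    by_cases hI : a n ≤ I.1 ∧ I.1 < I.2 ∧ I.2 ≤ b n
    · obtain ⟨x, y, hax, -, hyb, himg⟩ := exists_image_Icc_eq_Icc (hf (n + 1)) hI.2.1.le
        ((Icc_subset_Icc hI.1 hI.2.2).trans (hcov n))
      exact ⟨(x, y), fun _ => ⟨⟨hax, lt_of_image_Icc_eq_Icc hI.2.1 himg, hyb⟩, himg⟩⟩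
    · exact ⟨I, fun h => absurd h hI⟩
  choose g hg using step
  let I : ℕ → ℝ × ℝ := fun n => Nat.rec (a 0, b 0) g n
  have hI : ∀ n, a n ≤ (I n).1 ∧ (I n).1 < (I n).2 ∧ (I n).2 ≤ b n := by
    intro n
    induction n with
    | zero => exact ⟨le_rfl, h0, le_rfl⟩
    | succ n ih => exact (hg n (I n) ih).1
  exact ⟨fun n => (I n).1, fun n => (I n).2, hI, fun n => (hg n (I n) (hI n)).2⟩

theorem splittingSeq_of_covers {f : ℝ → ℝ} (hf : ContinuousOn f (Icc 0 1))
    {a₁ a₂ b₁ b₂ c₁ c₂ : ℝ} (ha : a₁ < a₂) (hA : Icc a₁ a₂ ⊆ Icc 0 1)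
    (hB : Icc b₁ b₂ ⊆ Icc 0 1) (hC : Icc c₁ c₂ ⊆ Icc 0 1)
    (hA₁ : Icc a₁ a₂ ≠ Icc 0 1) (hB₁ : Icc b₁ b₂ ≠ Icc 0 1)
    (hAB : Icc b₁ b₂ ⊆ f '' Icc a₁ a₂) (hBA : Icc a₁ a₂ ⊆ f '' Icc b₁ b₂)
    (hCA : Icc a₁ a₂ ⊆ f '' Icc c₁ c₂) (hCB : Icc c₁ c₂ ∩ Icc b₁ b₂ ⊆ {b₁, b₂}) :
    SplittingSeq f := by
  obtain ⟨l, r, hlr, himg⟩ := exists_seq_image_Icc_eq_Icc (f := f)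
    (a := fun n => if Even n then a₁ else b₁) (b := fun n => if Even n then a₂ else b₂)
    (fun n => by split_ifs; exacts [hf.mono hA, hf.mono hB]) (by simpa using ha)
    (fun n => by by_cases hn : Even n <;> simp [hn, Nat.even_add_one, hAB, hBA])
  have hTA : ∀ n, Even n → a₁ ≤ l n ∧ r n ≤ a₂ := fun n hn => by
    simpa [hn] using And.intro (hlr n).1 (hlr n).2.2
  have hTB : ∀ n, ¬Even n → b₁ ≤ l n ∧ r n ≤ b₂ := fun n hn => by
    simpa [hn] using And.intro (hlr n).1 (hlr n).2.2
  have hT : ∀ n, Icc (l n) (r n) ⊆ Icc 0 1 ∧ Icc (l n) (r n) ≠ Icc 0 1 := by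
    intro n
    by_cases hn : Even n
    · have hsub := Icc_subset_Icc (hTA n hn).1 (hTA n hn).2
      exact ⟨hsub.trans hA, fun h => hA₁ (hA.antisymm (h ▸ hsub))⟩
    · have hsub := Icc_subset_Icc (hTB n hn).1 (hTB n hn).2
      exact ⟨hsub.trans hB, fun h => hB₁ (hB.antisymm (h ▸ hsub))⟩
  have hS : ∀ k, ∃ x y, c₁ ≤ x ∧ x < y ∧ y ≤ c₂ ∧
      f '' Icc x y = Icc (l (2 * k)) (r (2 * k)) := by
    intro k
    obtain ⟨x, y, hcx, -, hyc, hxy⟩ := exists_image_Icc_eq_Icc (hf.mono hC) (hlr _).2.1.le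
      ((Icc_subset_Icc (hTA _ (even_two_mul k)).1 (hTA _ (even_two_mul k)).2).trans hCA)
    exact ⟨x, y, hcx, lt_of_image_Icc_eq_Icc (hlr _).2.1 hxy, hyc, hxy⟩
  choose x y hcx hxy hyc hxyimg using hS
  refine ⟨l, r, range (fun k => 2 * k + 1), fun n => Icc (x (n / 2)) (y (n / 2)),
    fun n => (hlr n).2.1.le, fun n => (hT n).1, fun n => (hT n).2, himg,
    ⟨0, fun n _ => (hlr n).2.1⟩, infinite_range_of_injective fun m n h => by omega, ?_⟩
  rintro _ ⟨k, rfl⟩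
  have hk : (2 * k + 1) / 2 = k := by omega
  have hodd : ¬Even (2 * k + 1) := by simp
  obtain ⟨hbl, hrb⟩ := hTB _ hodd
  simp only [hk]
  refine ⟨⟨x k, y k, hxy k, rfl⟩, (Icc_subset_Icc (hcx k) (hyc k)).trans hC, ?_,
    by rw [hxyimg, himg]⟩
  rintro z ⟨hzS, hzT⟩
  rcases hCB ⟨Icc_subset_Icc (hcx k) (hyc k) hzS, Icc_subset_Icc hbl hrb hzT⟩ with rfl | rfl
  · exact .inl (le_antisymm hzT.1 hbl).symm
  · exact .inr (le_antisymm hzT.2 hrb)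

lemma Icc_ne_Icc_zero_one_of_lt_one {a b : ℝ} (hb : b < 1) : Icc a b ≠ Icc 0 1 :=
  fun h => hb.not_ge ((Icc_subset_Icc_iff zero_le_one).1 h.ge).2

lemma Icc_ne_Icc_zero_one_of_pos {a b : ℝ} (ha : 0 < a) : Icc a b ≠ Icc 0 1 :=
  fun h => ha.not_ge ((Icc_subset_Icc_iff zero_le_one).1 h.ge).1

theorem splittingSeq_of_linked_twoCycles {f : ℝ → ℝ} (hf : ContinuousOn f (Icc 0 1))
    {s t u v : ℝ} (hs : s ∈ Icc (0 : ℝ) 1) (hv : v ∈ Icc (0 : ℝ) 1)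
    (hsu : s < u) (hut : u < t) (htv : t < v)
    (h1 : f s = t) (h2 : f t = s) (h3 : f u = v) (h4 : f v = u) : SplittingSeq f := by
  have hsv : Icc s v ⊆ Icc 0 1 := Icc_subset_Icc hs.1 hv.2
  have hA : Icc s u ⊆ Icc 0 1 := (Icc_subset_Icc_right (by linarith)).trans hsv
  have hB : Icc t v ⊆ Icc 0 1 := (Icc_subset_Icc_left (by linarith)).trans hsv
  have hC : Icc u t ⊆ Icc 0 1 := (Icc_subset_Icc (by linarith) (by linarith)).trans hsv
  refine splittingSeq_of_covers hf hsu hA hB hC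
    (Icc_ne_Icc_zero_one_of_lt_one (by linarith [hv.2]))
    (Icc_ne_Icc_zero_one_of_pos (by linarith [hs.1])) ?_ ?_ ?_ ?_
  · simpa only [h1, h3] using intermediate_value_Icc hsu.le (hf.mono hA)
  · simpa only [h2, h4] using intermediate_value_Icc htv.le (hf.mono hB)
  · have hcov := intermediate_value_Icc' hut.le (hf.mono hC)
    rw [h2, h3] at hcov
    exact (Icc_subset_Icc_right (hut.trans htv).le).trans hcov
  · rintro z ⟨⟨-, hzt⟩, htz, -⟩
    exact .inl (le_antisymm hzt htz)

theorem splittingSeq_of_twoCycle_of_lt {f : ℝ → ℝ} (hf : ContinuousOn f (Icc 0 1))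
    {s t u : ℝ} (hs : s ∈ Icc (0 : ℝ) 1) (hu : u ∈ Icc (0 : ℝ) 1) (hst : s < t) (htu : t < u)
    (h1 : f s = t) (h2 : f t = s) (hfu : t ≤ f u) : SplittingSeq f := by
  have hsu : Icc s u ⊆ Icc 0 1 := Icc_subset_Icc hs.1 hu.2
  have hA : Icc s t ⊆ Icc 0 1 := (Icc_subset_Icc_right htu.le).trans hsu
  have hC : Icc t u ⊆ Icc 0 1 := (Icc_subset_Icc_left hst.le).trans hsu
  have hA₁ : Icc s t ≠ Icc 0 1 := Icc_ne_Icc_zero_one_of_lt_one (htu.trans_le hu.2)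
  have hAA : Icc s t ⊆ f '' Icc s t := by
    simpa only [h1, h2] using intermediate_value_Icc' hst.le (hf.mono hA)
  refine splittingSeq_of_covers hf hst hA hA hC hA₁ hA₁ hAA hAA ?_ ?_
  · have hcov := intermediate_value_Icc htu.le (hf.mono hC)
    rw [h2] at hcov
    exact (Icc_subset_Icc_right hfu).trans hcov
  · rintro z ⟨⟨htz, -⟩, -, hzt⟩
    exact .inr (le_antisymm hzt htz)

theorem splittingSeq_of_twoCycles_of_lt_of_lt {f : ℝ → ℝ} (hf : ContinuousOn f (Icc 0 1))
    {s t u v : ℝ} (hs : s ∈ Icc (0 : ℝ) 1) (hu : u ∈ Icc (0 : ℝ) 1) (hv : v ∈ Icc (0 : ℝ) 1)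
    (hst : s < t) (h1 : f s = t) (h2 : f t = s) (h3 : f u = v) (h4 : f v = u)
    (hsu : s < u) (htv : t < v) : SplittingSeq f := by
  rcases lt_trichotomy u t with hut | rfl | htu
  · exact splittingSeq_of_linked_twoCycles hf hs hv hsu hut htv h1 h2 h3 h4
  · exact absurd (h2.symm.trans h3) (hst.trans htv).ne
  · exact splittingSeq_of_twoCycle_of_lt hf hs hu hst htu h1 h2 (h3 ▸ htv.le)

theorem stmt_3_general (f : ℝ → ℝ) (hf : ContinuousOn f (Icc 0 1))
    (hns : ¬ SplittingSeq f)
    (s t u v : ℝ) (hs : s ∈ Icc (0:ℝ) 1) (ht : t ∈ Icc (0:ℝ) 1)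
    (hu : u ∈ Icc (0:ℝ) 1) (hv : v ∈ Icc (0:ℝ) 1)
    (hst : s < t) (huv : u < v)
    (h1 : f s = t) (h2 : f t = s) (h3 : f u = v) (h4 : f v = u)
    (hne : s ≠ u) :
    (s < u ∧ v < t) ∨ (u < s ∧ t < v) := by
  rcases hne.lt_or_gt with hsu | hus
  · refine .inl ⟨hsu, not_le.1 fun hle => hns ?_⟩
    have htv : t < v := hle.lt_of_ne fun h => hne (by rw [← h2, h, h4])
    exact splittingSeq_of_twoCycles_of_lt_of_lt hf hs hu hv hst h1 h2 h3 h4 hsu htv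
  · refine .inr ⟨hus, not_le.1 fun hle => hns ?_⟩
    have hvt : v < t := hle.lt_of_ne fun h => hne (by rw [← h4, h, h2])
    exact splittingSeq_of_twoCycles_of_lt_of_lt hf hu hs ht huv h3 h4 h1 h2 hus hvt

theorem stmt_3 (f : ℝ → ℝ) (hf : ContinuousOn f (Icc 0 1))
    (hsurj : f '' Icc 0 1 = Icc 0 1) (hns : ¬ SplittingSeq f)
    (s t u v : ℝ) (hs : s ∈ Icc (0:ℝ) 1) (ht : t ∈ Icc (0:ℝ) 1)
    (hu : u ∈ Icc (0:ℝ) 1) (hv : v ∈ Icc (0:ℝ) 1)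
    (hst : s < t) (huv : u < v)
    (h1 : f s = t) (h2 : f t = s) (h3 : f u = v) (h4 : f v = u)
    (hne : s ≠ u) :
    (s < u ∧ v < t) ∨ (u < s ∧ t < v) :=
  stmt_3_general f hf hns s t u v hs ht hu hv hst huv h1 h2 h3 h4 hne
end

section
/- Let f : [0,1] → [0,1] be continuous and surjective. Then f admits a splitting sequence if and only if f∘f admits a splitting sequence. -/
open Set Filter Topology

/-!
Passing from `f` to `f ∘ f` is a matter of keeping every other interval of a splitting sequence.
Conversely, a tight sequence `Tₙ` for `f ∘ f` is interleaved with the intervals `f (Tₙ₊₁)` into a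
chain for `f`, which is then shrunk so that each interval is a minimal preimage of the previous
one: its endpoints, and only they, are sent to the endpoints of the previous interval. Two minimal
preimages of the same interval either coincide or meet only in endpoints. Hence if `Sₙ` splits
`Tₙ` for `f ∘ f`, a minimal preimage of `V₂ₙ` inside `f (Sₙ)` either splits `V₂ₙ₊₁`, or equals it,
and then a minimal preimage of `V₂ₙ₊₁` inside `Sₙ` splits `V₂ₙ₊₂`: it cannot equal `V₂ₙ₊₂ ⊆ Tₙ`,
which meets `Sₙ` in at most two points.
-/

def SplitsAt (f : ℝ → ℝ) (l r : ℝ) (s : Set ℝ) : Prop :=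
  (∃ u v : ℝ, u < v ∧ s = Icc u v) ∧ s ⊆ Icc 0 1 ∧ s ∩ Icc l r ⊆ {l, r} ∧
    f '' s = f '' Icc l r

lemma SplitsAt.comp {f : ℝ → ℝ} {l r : ℝ} {s : Set ℝ} (g : ℝ → ℝ) (h : SplitsAt f l r s) :
    SplitsAt (g ∘ f) l r s :=
  ⟨h.1, h.2.1, h.2.2.1, by rw [image_comp, h.2.2.2, ← image_comp]⟩

lemma Set.Infinite.exists_infinite_preimage_two_mul_add {N : Set ℕ} (hN : N.Infinite) :
    ∃ p, ((fun k => 2 * k + p) ⁻¹' N).Infinite := by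
  have hsplit : N = (N ∩ range (fun k => 2 * k + 0)) ∪ (N ∩ range (fun k => 2 * k + 1)) := by
    ext n
    obtain ⟨k, rfl | rfl⟩ := Nat.even_or_odd' n <;> simp
  rw [hsplit, infinite_union] at hN
  rcases hN with h | h
  exacts [⟨0, h.preimage'⟩, ⟨1, h.preimage'⟩]

lemma IsSplittingSeq.comp_self {f : ℝ → ℝ} {l r : ℕ → ℝ} {N : Set ℕ} {S : ℕ → Set ℝ}
    (h : IsSplittingSeq f l r N S) (p : ℕ) (hp : ((fun k => 2 * k + p) ⁻¹' N).Infinite) :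
    IsSplittingSeq (f ∘ f) (fun n => l (2 * n + p)) (fun n => r (2 * n + p))
      ((fun k => 2 * k + p) ⁻¹' N) (fun k => S (2 * k + p)) := by
  obtain ⟨hlr, hsub, hne, hchain, ⟨m, hm⟩, -, hsplit⟩ := h
  refine ⟨fun n => hlr _, fun n => hsub _, fun n => hne _, fun n => ?_,
    ⟨m, fun n hn => hm _ (by omega)⟩, hp, fun k hk => SplitsAt.comp f (hsplit _ hk)⟩
  simp only [image_comp, show 2 * (n + 1) + p = 2 * n + p + 1 + 1 by ring, hchain]

lemma SplittingSeq.comp_self {f : ℝ → ℝ} (h : SplittingSeq f) : SplittingSeq (f ∘ f) := by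
  obtain ⟨l, r, N, S, h⟩ := h
  obtain ⟨p, hp⟩ := h.2.2.2.2.2.1.exists_infinite_preimage_two_mul_add
  exact ⟨_, _, _, _, h.comp_self p hp⟩

def IsGap (Z : Set ℝ) (u v : ℝ) : Prop :=
  u ∈ Z ∧ v ∈ Z ∧ ∀ t ∈ Ioo u v, t ∉ Z

lemma IsGap.eq_or_inter_subset {Z : Set ℝ} {u₁ v₁ u₂ v₂ : ℝ} (h₁ : IsGap Z u₁ v₁)
    (h₂ : IsGap Z u₂ v₂) : (u₁ = u₂ ∧ v₁ = v₂) ∨ Icc u₂ v₂ ∩ Icc u₁ v₁ ⊆ {u₁, v₁} := by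
  refine or_iff_not_imp_right.2 fun hmeet => ?_
  obtain ⟨t, ⟨ht₂, ht₁⟩, htuv⟩ := not_subset.1 hmeet
  simp only [mem_insert_iff, mem_singleton_iff, not_or] at htuv
  have ht : t ∈ Ioo u₁ v₁ := ⟨ht₁.1.lt_of_ne' htuv.1, ht₁.2.lt_of_ne htuv.2⟩
  have hu : u₂ ≤ u₁ := not_lt.1 fun h => h₁.2.2 u₂ ⟨h, ht₂.1.trans_lt ht.2⟩ h₂.1
  have hv : v₁ ≤ v₂ := not_lt.1 fun h => h₁.2.2 v₂ ⟨ht.1.trans_le ht₂.2, h⟩ h₂.2.1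
  refine ⟨hu.antisymm' (not_lt.1 fun h => h₂.2.2 u₁ ⟨h, ht.1.trans_le ht₂.2⟩ h₁.1),
    hv.antisymm (not_lt.1 fun h => h₂.2.2 v₁ ⟨ht₂.1.trans_lt ht.2, h⟩ h₁.2.1)⟩

def IsMinimalPreimage (f : ℝ → ℝ) (c d u v : ℝ) : Prop :=
  f '' Icc u v = uIcc c d ∧ IsGap (f ⁻¹' {c, d}) u v

lemma IsMinimalPreimage.symm {f : ℝ → ℝ} {c d u v : ℝ} (h : IsMinimalPreimage f c d u v) :
    IsMinimalPreimage f d c u v := by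
  rwa [IsMinimalPreimage, uIcc_comm, pair_comm]

lemma IsMinimalPreimage.eq_or_inter_subset {f : ℝ → ℝ} {c d u₁ v₁ u₂ v₂ : ℝ}
    (h₁ : IsMinimalPreimage f c d u₁ v₁) (h₂ : IsMinimalPreimage f c d u₂ v₂) :
    (u₁ = u₂ ∧ v₁ = v₂) ∨ Icc u₂ v₂ ∩ Icc u₁ v₁ ⊆ {u₁, v₁} :=
  h₁.2.eq_or_inter_subset h₂.2

lemma image_Icc_eq_uIcc_of_forall_ne {f : ℝ → ℝ} {u v : ℝ} (huv : u ≤ v)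
    (hf : ContinuousOn f (Icc u v)) (hne : f u ≠ f v)
    (hgap : ∀ t ∈ Ioo u v, f t ≠ f u ∧ f t ≠ f v) : f '' Icc u v = uIcc (f u) (f v) := by
  have hivt := intermediate_value_uIcc (f := f) (a := u) (b := v) (by rwa [uIcc_of_le huv])
  rw [uIcc_of_le huv] at hivt
  refine subset_antisymm ?_ hivt
  rintro _ ⟨t, ht, rfl⟩
  by_contra hout
  have htu : t ≠ u := by rintro rfl; exact hout left_mem_uIcc
  have htv : t ≠ v := by rintro rfl; exact hout right_mem_uIcc
  have ht' : t ∈ Ioo u v := ⟨ht.1.lt_of_ne' htu, ht.2.lt_of_ne htv⟩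
  -- `f t` lies outside the interval, so one of the endpoint values is hit again in `(u, v)`.
  have hcases : f u ∈ uIcc (f t) (f v) ∨ f v ∈ uIcc (f u) (f t) := by
    simp only [mem_uIcc] at hout ⊢; grind
  rcases hcases with hmem | hmem
  · obtain ⟨s, hs, hfs⟩ := intermediate_value_uIcc (hf.mono (by simp [uIcc_of_le ht.2,
      Icc_subset_Icc_left ht.1])) hmem
    rw [uIcc_of_le ht.2] at hs
    have hst : s ≠ t := by rintro rfl; exact (hgap s ht').1 hfs
    have hsv : s ≠ v := by rintro rfl; exact hne hfs.symm
    exact (hgap s ⟨ht'.1.trans_le hs.1, hs.2.lt_of_ne hsv⟩).1 hfs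
  · obtain ⟨s, hs, hfs⟩ := intermediate_value_uIcc (hf.mono (by simp [uIcc_of_le ht.1,
      Icc_subset_Icc_right ht.2])) hmem
    rw [uIcc_of_le ht.1] at hs
    have hst : s ≠ t := by rintro rfl; exact (hgap s ht').2 hfs
    have hsu : s ≠ u := by rintro rfl; exact hne hfs
    exact (hgap s ⟨hs.1.lt_of_ne' hsu, (hs.2.lt_of_ne hst).trans ht'.2⟩).2 hfs

/-- Take for `v` the first point of `[x, y]` where `f = f y`, and for `u` the last point of
`[x, v]` where `f = f x`. -/
lemma exists_isMinimalPreimage_of_lt {f : ℝ → ℝ} {x y : ℝ} (hxy : x < y)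
    (hf : ContinuousOn f (Icc x y)) (hne : f x ≠ f y) :
    ∃ u v, u < v ∧ Icc u v ⊆ Icc x y ∧ IsMinimalPreimage f (f x) (f y) u v := by
  obtain ⟨v, ⟨⟨hxv, hvy⟩, hfv⟩, hv⟩ : ∃ v, IsLeast (Icc x y ∩ f ⁻¹' {f y}) v :=
    (isCompact_Icc.of_isClosed_subset (hf.preimage_isClosed_of_isClosed isClosed_Icc
      isClosed_singleton) inter_subset_left).exists_isLeast ⟨y, ⟨hxy.le, le_rfl⟩, rfl⟩
  obtain ⟨u, ⟨⟨hxu, huv⟩, hfu⟩, hu⟩ : ∃ u, IsGreatest (Icc x v ∩ f ⁻¹' {f x}) u :=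
    have hf' := hf.mono (Icc_subset_Icc_right hvy)
    (isCompact_Icc.of_isClosed_subset (hf'.preimage_isClosed_of_isClosed isClosed_Icc
      isClosed_singleton) inter_subset_left).exists_isGreatest ⟨x, ⟨le_rfl, hxv⟩, rfl⟩
  simp only [mem_preimage, mem_singleton_iff] at hfu hfv
  have huv : u < v := huv.lt_of_ne fun h => hne (hfu.symm.trans (h ▸ hfv))
  have hgap : ∀ t ∈ Ioo u v, f t ≠ f u ∧ f t ≠ f v := fun t ht =>
    ⟨fun h => ht.1.not_ge (hu ⟨⟨hxu.trans ht.1.le, ht.2.le⟩, h.trans hfu⟩),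
      fun h => ht.2.not_ge (hv ⟨⟨hxu.trans ht.1.le, ht.2.le.trans hvy⟩, h.trans hfv⟩)⟩
  have hsub : Icc u v ⊆ Icc x y := Icc_subset_Icc hxu hvy
  refine ⟨u, v, huv, hsub, ?_, by simp [hfu], by simp [hfv], fun t ht => ?_⟩
  · rw [← hfu, ← hfv]
    exact image_Icc_eq_uIcc_of_forall_ne huv.le (hf.mono hsub) (hfu ▸ hfv ▸ hne) hgap
  · simpa [← hfu, ← hfv] using hgap t ht

lemma exists_isMinimalPreimage {f : ℝ → ℝ} {s : Set ℝ} (hs : s.OrdConnected)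
    (hf : ContinuousOn f s) {c d : ℝ} (hcd : c ≠ d) (hc : c ∈ f '' s) (hd : d ∈ f '' s) :
    ∃ u v, u < v ∧ Icc u v ⊆ s ∧ IsMinimalPreimage f c d u v := by
  obtain ⟨x, hx, rfl⟩ := hc
  obtain ⟨y, hy, rfl⟩ := hd
  rcases lt_trichotomy x y with hxy | rfl | hyx
  · obtain ⟨u, v, huv, hsub, h⟩ := exists_isMinimalPreimage_of_lt hxy (hf.mono (hs.out hx hy)) hcd
    exact ⟨u, v, huv, hsub.trans (hs.out hx hy), h⟩
  · exact absurd rfl hcd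
  · obtain ⟨u, v, huv, hsub, h⟩ :=
      exists_isMinimalPreimage_of_lt hyx (hf.mono (hs.out hy hx)) hcd.symm
    exact ⟨u, v, huv, hsub.trans (hs.out hy hx), h.symm⟩

lemma exists_isMinimalPreimage_chain {f : ℝ → ℝ} {D : ℕ → Set ℝ}
    (hD : ∀ k, (D k).OrdConnected) (hf : ∀ k, ContinuousOn f (D k))
    (hDf : ∀ k, D k ⊆ f '' D (k + 1)) {c d : ℝ} (hcd : c < d) (h₀ : Icc c d ⊆ D 0) :
    ∃ l r : ℕ → ℝ, (∀ k, l k < r k ∧ Icc (l k) (r k) ⊆ D k) ∧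
      ∀ k, IsMinimalPreimage f (l k) (r k) (l (k + 1)) (r (k + 1)) := by
  have step : ∀ k (p : ℝ × ℝ), p.1 < p.2 ∧ Icc p.1 p.2 ⊆ D k →
      ∃ q : ℝ × ℝ, (q.1 < q.2 ∧ Icc q.1 q.2 ⊆ D (k + 1)) ∧ IsMinimalPreimage f p.1 p.2 q.1 q.2 := by
    rintro k ⟨a, b⟩ ⟨hab, hsub⟩
    obtain ⟨u, v, huv, hsub', hmin⟩ := exists_isMinimalPreimage (hD (k + 1)) (hf (k + 1)) hab.ne
      (hDf k (hsub (left_mem_Icc.2 hab.le))) (hDf k (hsub (right_mem_Icc.2 hab.le)))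
    exact ⟨(u, v), ⟨huv, hsub'⟩, hmin⟩
  choose! next hnext using step
  let V : ℕ → ℝ × ℝ := fun k => Nat.rec (motive := fun _ => ℝ × ℝ) (c, d) next k
  have hV : ∀ k, (V k).1 < (V k).2 ∧ Icc (V k).1 (V k).2 ⊆ D k := by
    intro k
    induction k with
    | zero => exact ⟨hcd, h₀⟩
    | succ k ih => exact (hnext k _ ih).1
  exact ⟨fun k => (V k).1, fun k => (V k).2, hV, fun k => (hnext k _ (hV k)).2⟩

/-- The sequence `T 0, f (T 1), T 1, f (T 2), T 2, …`. -/
def interleave (f : ℝ → ℝ) (T : ℕ → Set ℝ) (k : ℕ) : Set ℝ :=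
  f^[k % 2] '' T ((k + 1) / 2)

section interleave

variable {f : ℝ → ℝ} {T : ℕ → Set ℝ}

@[simp] lemma interleave_two_mul (n : ℕ) : interleave f T (2 * n) = T n := by
  simp [interleave, show (2 * n + 1) / 2 = n by omega]

@[simp] lemma interleave_zero : interleave f T 0 = T 0 :=
  interleave_two_mul 0

@[simp] lemma interleave_two_mul_add_one (n : ℕ) : interleave f T (2 * n + 1) = f '' T (n + 1) := by
  simp [interleave, Nat.add_mod, show (2 * n + 1 + 1) / 2 = n + 1 by omega]

lemma forall_interleave {P : Set ℝ → Prop} (hT : ∀ n, P (T n)) (hfT : ∀ n, P (f '' T (n + 1)))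
    (k : ℕ) : P (interleave f T k) := by
  obtain ⟨n, rfl | rfl⟩ := Nat.even_or_odd' k
  · simpa using hT n
  · simpa using hfT n

lemma image_interleave_succ (hT : ∀ n, (f ∘ f) '' T (n + 1) = T n) (k : ℕ) :
    f '' interleave f T (k + 1) = interleave f T k := by
  obtain ⟨n, rfl | rfl⟩ := Nat.even_or_odd' k
  · rw [interleave_two_mul_add_one, interleave_two_mul, ← image_comp, hT]
  · rw [show 2 * n + 1 + 1 = 2 * (n + 1) by ring, interleave_two_mul, interleave_two_mul_add_one]

end interleave

lemma exists_splitsAt_of_isMinimalPreimage {f : ℝ → ℝ} (hf : ContinuousOn f (Icc 0 1))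
    (hmaps : MapsTo f (Icc 0 1) (Icc 0 1)) {c₀ d₀ c₁ d₁ c₂ d₂ l r : ℝ} {s : Set ℝ}
    (hcd₀ : c₀ < d₀) (hcd₁ : c₁ < d₁) (hcd₂ : c₂ < d₂)
    (h₁ : IsMinimalPreimage f c₀ d₀ c₁ d₁) (h₂ : IsMinimalPreimage f c₁ d₁ c₂ d₂)
    (h₂T : Icc c₂ d₂ ⊆ Icc l r) (hs : SplitsAt (f ∘ f) l r s) (h₀ : Icc c₀ d₀ ⊆ (f ∘ f) '' s) :
    (∃ s', SplitsAt f c₁ d₁ s') ∨ ∃ s', SplitsAt f c₂ d₂ s' := by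
  obtain ⟨⟨a, b, -, rfl⟩, hs01, hsT, -⟩ := hs
  have hB01 : f '' Icc a b ⊆ Icc 0 1 := (image_mono hs01).trans hmaps.image_subset
  have hB : (f '' Icc a b).OrdConnected :=
    (isPreconnected_Icc.image f (hf.mono hs01)).ordConnected
  rw [image_comp] at h₀
  obtain ⟨u₁, v₁, huv₁, hsub₁, hmin₁⟩ := exists_isMinimalPreimage hB (hf.mono hB01) hcd₀.ne
    (h₀ (left_mem_Icc.2 hcd₀.le)) (h₀ (right_mem_Icc.2 hcd₀.le))
  rcases h₁.eq_or_inter_subset hmin₁ with ⟨rfl, rfl⟩ | hsplit₁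
  · obtain ⟨u₂, v₂, huv₂, hsub₂, hmin₂⟩ := exists_isMinimalPreimage ordConnected_Icc
      (hf.mono hs01) hcd₁.ne (hsub₁ (left_mem_Icc.2 hcd₁.le)) (hsub₁ (right_mem_Icc.2 hcd₁.le))
    rcases h₂.eq_or_inter_subset hmin₂ with ⟨rfl, rfl⟩ | hsplit₂
    · exact absurd (toFinite {l, r})
        ((Icc_infinite hcd₂).mono fun t ht => hsT ⟨hsub₂ ht, h₂T ht⟩)
    · exact Or.inr ⟨Icc u₂ v₂, ⟨u₂, v₂, huv₂, rfl⟩, hsub₂.trans hs01, hsplit₂,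
        by rw [hmin₂.1, h₂.1]⟩
  · exact Or.inl ⟨Icc u₁ v₁, ⟨u₁, v₁, huv₁, rfl⟩, hsub₁.trans hB01, hsplit₁,
      by rw [hmin₁.1, h₁.1]⟩

lemma Icc_ne_of_image_eq {f : ℝ → ℝ} (hsurj : f '' Icc 0 1 = Icc 0 1) {a b : ℕ → ℝ}
    (himage : ∀ k, f '' Icc (a (k + 1)) (b (k + 1)) = Icc (a k) (b k))
    (h₀ : Icc (a 0) (b 0) ≠ Icc 0 1) (k : ℕ) : Icc (a k) (b k) ≠ Icc 0 1 := by
  induction k with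
  | zero => exact h₀
  | succ k ih => exact fun h => ih (by rw [← himage k, h, hsurj])

lemma SplittingSeq.of_comp_self {f : ℝ → ℝ} (hf : ContinuousOn f (Icc 0 1))
    (hsurj : f '' Icc 0 1 = Icc 0 1) (h : SplittingSeq (f ∘ f)) : SplittingSeq f := by
  obtain ⟨l, r, N, S, -, hsub, hne, hchain, ⟨m, hm⟩, hN, hsplit⟩ := h
  have hmaps : MapsTo f (Icc 0 1) (Icc 0 1) := fun x hx => hsurj ▸ mem_image_of_mem f hx
  set T : ℕ → Set ℝ := fun n => Icc (l (n + m + 1)) (r (n + m + 1)) with hT_def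
  have hT : ∀ n, (f ∘ f) '' T (n + 1) = T n := fun n => by
    simpa [hT_def, add_right_comm n 1 m] using hchain (n + m + 1)
  have hD01 : ∀ k, interleave f T k ⊆ Icc 0 1 :=
    forall_interleave (P := (· ⊆ Icc 0 1)) (fun _ => hsub _)
      fun _ => (image_mono (hsub _)).trans hmaps.image_subset
  have hD : ∀ k, (interleave f T k).OrdConnected :=
    forall_interleave (P := OrdConnected) (fun _ => ordConnected_Icc)
      fun _ => (isPreconnected_Icc.image f (hf.mono (hsub _))).ordConnected
  obtain ⟨a, b, hab, hmin⟩ := exists_isMinimalPreimage_chain hD (fun k => hf.mono (hD01 k))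
    (fun k => (image_interleave_succ hT k).superset) (hm (0 + m + 1) (by omega))
    (interleave_zero (T := T)).superset
  have himage : ∀ k, f '' Icc (a (k + 1)) (b (k + 1)) = Icc (a k) (b k) := fun k => by
    rw [(hmin k).1, uIcc_of_le (hab k).1.le]
  have hsplitV : {k | ∃ s, SplitsAt f (a k) (b k) s}.Infinite := by
    refine infinite_of_forall_exists_gt fun K => ?_
    obtain ⟨j, hjN, hjK⟩ := hN.exists_gt (K + m + 2)
    obtain ⟨n, rfl⟩ : ∃ n, j = n + 1 + m + 1 := ⟨j - m - 2, by omega⟩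
    have hV₂ := (hab (2 * (n + 1))).2
    have hV₀ := (hab (2 * n)).2
    rw [interleave_two_mul] at hV₂ hV₀
    rcases exists_splitsAt_of_isMinimalPreimage hf hmaps (hab (2 * n)).1 (hab (2 * n + 1)).1
        (hab (2 * (n + 1))).1 (hmin (2 * n)) (hmin (2 * n + 1)) hV₂ (hsplit _ hjN)
        (by rw [(hsplit _ hjN).2.2.2, hT]; exact hV₀) with h | h
    exacts [⟨2 * n + 1, h, by omega⟩, ⟨2 * (n + 1), h, by omega⟩]
  have hproper₀ : Icc (a 0) (b 0) ≠ Icc 0 1 := fun h => by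
    have h₀ := (hab 0).2
    rw [h, interleave_zero] at h₀
    exact hne (0 + m + 1) ((hsub _).antisymm h₀)
  choose! S hS using fun k (hk : k ∈ {k | ∃ s, SplitsAt f (a k) (b k) s}) => hk
  exact ⟨a, b, _, S, fun k => (hab k).1.le, fun k => (hab k).2.trans (hD01 k),
    Icc_ne_of_image_eq hsurj himage hproper₀, himage, ⟨0, fun k _ => (hab k).1⟩, hsplitV, hS⟩

theorem stmt_4 (f : ℝ → ℝ) (hf : ContinuousOn f (Icc 0 1))
    (hsurj : f '' Icc 0 1 = Icc 0 1) :
    SplittingSeq f ↔ SplittingSeq (f ∘ f) :=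
  ⟨SplittingSeq.comp_self, SplittingSeq.of_comp_self hf hsurj⟩
end

section
/- Let f : [0,1] → [0,1] be continuous, surjective, and not admitting a splitting sequence. Let a = max f⁻¹(0) and b = min f⁻¹(1), and suppose a < b. Then the maximum fixed point d of f is the only fixed point of f in [b, 1]. -/
open Set Filter Topology

/-!
If `f` had a fixed point `x` with `b ≤ x < d`, then `[x, d] ⊆ f [x, d]`, and since `f x ≤ x` and
`d ≤ f d`, the interval `[x, d]` can be pulled back to a nested sequence of nondegenerate intervals
`T n ⊆ [x, d]` with `f (T (n + 1)) = T n`. As `f [a, b] ⊇ [0, 1]`, each `T n` is also the image of a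
nondegenerate subinterval `S n` of `[a, b]`, which lies to the left of `T (n + 1)` and meets it at
most in `b = x`. So `(T (n + 1), S n)` is a splitting sequence.
-/

section Hitting

variable {f : ℝ → ℝ} {p q y : ℝ}

lemma isCompact_Icc_inter_preimage_singleton (hf : ContinuousOn f (Icc p q)) :
    IsCompact (Icc p q ∩ f ⁻¹' {y}) :=
  isCompact_Icc.of_isClosed_subset
    (hf.preimage_isClosed_of_isClosed isClosed_Icc isClosed_singleton) inter_subset_left

lemma exists_first_hit (hpq : p ≤ q) (hf : ContinuousOn f (Icc p q))
    (hy : y ∈ Icc (f p) (f q)) : ∃ v ∈ Icc p q, f v = y ∧ ∀ t ∈ Icc p v, f t ≤ y := by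
  obtain ⟨v, ⟨hv, hfv⟩, hmin⟩ :=
    (isCompact_Icc_inter_preimage_singleton hf).exists_isLeast (intermediate_value_Icc hpq hf hy)
  refine ⟨v, hv, hfv, fun t ht => not_lt.1 fun hlt => ?_⟩
  obtain ⟨s, hs, hfs⟩ := intermediate_value_Icc ht.1
    (hf.mono (Icc_subset_Icc_right (ht.2.trans hv.2))) ⟨hy.1, hlt.le⟩
  have hts : t = s :=
    le_antisymm (ht.2.trans (hmin ⟨⟨hs.1, hs.2.trans (ht.2.trans hv.2)⟩, hfs⟩)) hs.2
  exact hlt.ne' (hts ▸ hfs)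

lemma exists_last_hit (hpq : p ≤ q) (hf : ContinuousOn f (Icc p q))
    (hy : y ∈ Icc (f p) (f q)) : ∃ u ∈ Icc p q, f u = y ∧ ∀ t ∈ Icc u q, y ≤ f t := by
  obtain ⟨u, ⟨hu, hfu⟩, hmax⟩ :=
    (isCompact_Icc_inter_preimage_singleton hf).exists_isGreatest (intermediate_value_Icc hpq hf hy)
  refine ⟨u, hu, hfu, fun t ht => not_lt.1 fun hlt => ?_⟩
  obtain ⟨s, hs, hfs⟩ := intermediate_value_Icc ht.2
    (hf.mono (Icc_subset_Icc_left (hu.1.trans ht.1))) ⟨hlt.le, hy.2⟩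
  have hst : s = t :=
    le_antisymm (hmax ⟨⟨(hu.1.trans ht.1).trans hs.1, hs.2⟩, hfs⟩ |>.trans ht.1) hs.1
  exact hlt.ne (hst ▸ hfs)

/-- Between a last hit of `c` and the first hit of `e` after it, `f` stays in `[c, e]`. -/
lemma exists_Icc_image_eq_Icc {c e : ℝ} (hpq : p ≤ q) (hf : ContinuousOn f (Icc p q))
    (hc : f p ≤ c) (hce : c ≤ e) (he : e ≤ f q) :
    ∃ u v, p ≤ u ∧ u ≤ v ∧ v ≤ q ∧ f u = c ∧ f v = e ∧ f '' Icc u v = Icc c e := by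
  obtain ⟨v, hv, hfv, hle⟩ := exists_first_hit hpq hf ⟨hc.trans hce, he⟩
  obtain ⟨u, hu, hfu, hge⟩ :=
    exists_last_hit hv.1 (hf.mono (Icc_subset_Icc_right hv.2)) ⟨hc, hfv ▸ hce⟩
  refine ⟨u, v, hu.1, hu.2, hv.2, hfu, hfv, ?_⟩
  refine Subset.antisymm (image_subset_iff.2 fun t ht =>
    show f t ∈ Icc c e from ⟨hge t ht, hle t ⟨hu.1.trans ht.1, ht.2⟩⟩) ?_
  rw [← hfu, ← hfv]
  exact intermediate_value_Icc hu.2 (hf.mono (Icc_subset_Icc hu.1 hv.2))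

end Hitting

/-- The invariant `f l ≤ l`, `r ≤ f r` makes `[l, r]` the image of a subinterval with the same
property, so the pull-back can be iterated. -/
lemma exists_nested_preimage_seq {f : ℝ → ℝ} {p q : ℝ} (hf : ContinuousOn f (Icc p q))
    (hpq : p < q) (hp : f p ≤ p) (hq : q ≤ f q) :
    ∃ l r : ℕ → ℝ, (∀ n, p ≤ l n ∧ l n < r n ∧ r n ≤ q) ∧
      ∀ n, f '' Icc (l (n + 1)) (r (n + 1)) = Icc (l n) (r n) := by
  let P : ℝ × ℝ → Prop := fun I => p ≤ I.1 ∧ I.1 < I.2 ∧ I.2 ≤ q ∧ f I.1 ≤ I.1 ∧ I.2 ≤ f I.2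
  have step : ∀ I : Subtype P, ∃ J : Subtype P,
      f '' Icc J.1.1 J.1.2 = Icc I.1.1 I.1.2 := by
    rintro ⟨⟨l, r⟩, hpl, hlr, hrq, hl, hr⟩
    obtain ⟨u, v, hlu, huv, hvr, hfu, hfv, himg⟩ := exists_Icc_image_eq_Icc hlr.le
      (hf.mono (Icc_subset_Icc hpl hrq)) hl hlr.le hr
    have huv' : u < v := huv.lt_of_ne fun h => hlr.ne (hfu ▸ hfv ▸ congrArg f h)
    exact ⟨⟨(u, v), hpl.trans hlu, huv', hvr.trans hrq, hfu ▸ hlu, hfv ▸ hvr⟩, himg⟩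
  choose g hg using step
  let I : ℕ → Subtype P := fun n => g^[n] ⟨(p, q), le_rfl, hpq, le_rfl, hp, hq⟩
  refine ⟨fun n => (I n).1.1, fun n => (I n).1.2,
    fun n => ⟨(I n).2.1, (I n).2.2.1, (I n).2.2.2.1⟩, fun n => ?_⟩
  simp only [I, Function.iterate_succ_apply']
  exact hg _

lemma splittingSeq_of_lt {f : ℝ → ℝ} {a b x d : ℝ} (hf : ContinuousOn f (Icc 0 1))
    (ha : 0 ≤ a) (hab : a < b) (hbx : b ≤ x) (hxd : x < d) (hd : d ≤ 1)
    (hfa : f a = 0) (hfb : f b = 1) (hfx : f x ≤ x) (hfd : d ≤ f d) : SplittingSeq f := by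
  have hx : 0 < x := ha.trans_lt (hab.trans_le hbx)
  obtain ⟨l, r, hlr, himg⟩ := exists_nested_preimage_seq (p := x) (q := d)
    (hf.mono (Icc_subset_Icc hx.le hd)) hxd hfx hfd
  have hT : ∀ n, Icc (l n) (r n) ⊆ Icc 0 1 := fun n =>
    Icc_subset_Icc (hx.le.trans (hlr n).1) ((hlr n).2.2.trans hd)
  have hS : ∀ n, ∃ u v, a ≤ u ∧ u ≤ v ∧ v ≤ b ∧ f u = l n ∧ f v = r n ∧
      f '' Icc u v = Icc (l n) (r n) := fun n =>
    exists_Icc_image_eq_Icc hab.le (hf.mono (Icc_subset_Icc ha (hbx.trans (hxd.le.trans hd))))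
      (hfa ▸ (hT n) (left_mem_Icc.2 (hlr n).2.1.le) |>.1) (hlr n).2.1.le
      (hfb ▸ (hT n) (right_mem_Icc.2 (hlr n).2.1.le) |>.2)
  choose u v hau huv hvb hfu hfv hSimg using hS
  refine ⟨fun n => l (n + 1), fun n => r (n + 1), univ, fun n => Icc (u n) (v n),
    fun n => (hlr _).2.1.le, fun n => hT _, fun n h => ?_, fun n => himg _,
    ⟨0, fun n _ => (hlr _).2.1⟩, infinite_univ, fun n _ => ⟨⟨u n, v n, ?_, rfl⟩, ?_, ?_, ?_⟩⟩
  · have h0 : (0 : ℝ) ∈ Icc (l (n + 1)) (r (n + 1)) := h ▸ left_mem_Icc.2 zero_le_one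
    exact hx.not_ge ((hlr _).1.trans h0.1)
  · exact (huv n).lt_of_ne fun h => (hlr n).2.1.ne (hfu n ▸ hfv n ▸ congrArg f h)
  · exact (Icc_subset_Icc (hau n) (hvb n)).trans (Icc_subset_Icc ha (hbx.trans (hxd.le.trans hd)))
  · rintro y ⟨hyS, hyT⟩
    exact Or.inl (le_antisymm ((hyS.2.trans (hvb n)).trans (hbx.trans (hlr _).1)) hyT.1)
  · rw [hSimg, himg]

theorem stmt_5_general (f : ℝ → ℝ) (hf : ContinuousOn f (Icc 0 1))
    (hns : ¬ SplittingSeq f)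
    (a b d : ℝ)
    (ha : IsGreatest {x ∈ Icc (0:ℝ) 1 | f x = 0} a)
    (hb : IsLeast {x ∈ Icc (0:ℝ) 1 | f x = 1} b)
    (hab : a < b)
    (hd : IsGreatest {x ∈ Icc (0:ℝ) 1 | f x = x} d) :
    ∀ x ∈ Icc b 1, f x = x → x = d := by
  intro x hx hfx
  obtain ⟨⟨⟨ha0, -⟩, hfa⟩, -⟩ := ha
  obtain ⟨⟨-, hfb⟩, -⟩ := hb
  obtain ⟨⟨⟨-, hd1⟩, hfd⟩, hdmax⟩ := hd
  have hxd_le : x ≤ d := hdmax ⟨⟨ha0.trans (hab.le.trans hx.1), hx.2⟩, hfx⟩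
  refine hxd_le.eq_or_lt.resolve_right fun hxd => hns ?_
  exact splittingSeq_of_lt hf ha0 hab hx.1 hxd hd1 hfa hfb hfx.le hfd.ge

theorem stmt_5 (f : ℝ → ℝ) (hf : ContinuousOn f (Icc 0 1))
    (hsurj : f '' Icc 0 1 = Icc 0 1) (hns : ¬ SplittingSeq f)
    (a b d : ℝ)
    (ha : IsGreatest {x ∈ Icc (0:ℝ) 1 | f x = 0} a)
    (hb : IsLeast {x ∈ Icc (0:ℝ) 1 | f x = 1} b)
    (hab : a < b)
    (hd : IsGreatest {x ∈ Icc (0:ℝ) 1 | f x = x} d) :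
    ∀ x ∈ Icc b 1, f x = x → x = d :=
  stmt_5_general f hf hns a b d ha hb hab hd
end

section
/- Let f : [0,1] → [0,1] be continuous, surjective, and not admitting a splitting sequence. Let a = max f⁻¹(0) and b = min f⁻¹(1), and suppose a < b. Then the restriction of f to [b, 1] admits no 2-cycle: there are no p, q ∈ [b,1] with p ≠ q, f(p) = q, and f(q) = p. -/
/-!
Write the 2-cycle as `p < q`. By the intermediate value theorem `[p, q] ⊆ f [p, q]`, so
`[p, q]` can be pulled back inside itself forever: there are nondegenerate intervals
`T n ⊆ [p, q]` with `f (T (n+1)) = T n`. Since `f [a, b] ⊇ [0, 1]`, every `T n` is also the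
image of a nondegenerate interval in `[a, b]`, which meets `T (n+1)` at most in `b ≤ p`.
These intervals split the sequence `T`.
-/

open Set Filter Topology

lemma exists_Icc_subset_image_eq_Icc_of_le {f : ℝ → ℝ} {x y u v : ℝ}
    (hf : ContinuousOn f (Icc x y)) (hxy : x ≤ y) (hfx : f x = u) (hfy : f y = v)
    (huv : u ≤ v) : ∃ s t, x ≤ s ∧ s ≤ t ∧ t ≤ y ∧ f '' Icc s t = Icc u v := by
  have hcompact : ∀ {w c}, c ≤ y → IsCompact (Icc x c ∩ f ⁻¹' {w}) := fun hc =>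
    isCompact_Icc.of_isClosed_subset
      ((hf.mono (Icc_subset_Icc_right hc)).preimage_isClosed_of_isClosed isClosed_Icc
        isClosed_singleton) inter_subset_left
  -- `t` is the first time `f` reaches `v`, and `s` the last time before `t` that `f` equals `u`.
  obtain ⟨t, ⟨⟨hxt, hty⟩, hft⟩, ht⟩ :=
    (hcompact le_rfl).exists_isLeast ⟨y, right_mem_Icc.2 hxy, hfy⟩
  obtain ⟨s, ⟨⟨hxs, hst⟩, hfs⟩, hs⟩ :=
    (hcompact hty).exists_isGreatest ⟨x, left_mem_Icc.2 hxt, hfx⟩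
  rw [mem_preimage, mem_singleton_iff] at hfs hft
  have hcont : ContinuousOn f (Icc s t) := hf.mono (Icc_subset_Icc hxs hty)
  refine ⟨s, t, hxs, hst, hty, Subset.antisymm ?_ ?_⟩
  · rintro _ ⟨z, hz, rfl⟩
    constructor
    · by_contra! hzu
      obtain ⟨w, hw, hfw⟩ := intermediate_value_Icc hz.2
        (hcont.mono (Icc_subset_Icc_left hz.1)) ⟨hzu.le, hft ▸ huv⟩
      have hws : w ≤ s := hs ⟨⟨hxs.trans (hz.1.trans hw.1), hw.2⟩, hfw⟩
      have hwz : w = z := le_antisymm (hws.trans hz.1) hw.1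
      exact hzu.ne (hwz ▸ hfw)
    · by_contra! hvz
      obtain ⟨w, hw, hfw⟩ := intermediate_value_Icc hz.1
        (hcont.mono (Icc_subset_Icc_right hz.2)) ⟨hfs ▸ huv, hvz.le⟩
      have htw : t ≤ w := ht ⟨⟨hxs.trans hw.1, (hw.2.trans hz.2).trans hty⟩, hfw⟩
      have hwz : w = z := le_antisymm hw.2 (hz.2.trans htw)
      exact hvz.ne' (hwz ▸ hfw)
  · simpa only [hfs, hft] using intermediate_value_Icc hst hcont

lemma ContinuousOn.exists_Icc_subset_image_eq_Icc {f : ℝ → ℝ} {c d u v : ℝ}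
    (hf : ContinuousOn f (Icc c d)) (huv : u < v) (hu : u ∈ f '' Icc c d)
    (hv : v ∈ f '' Icc c d) :
    ∃ s t, s < t ∧ Icc s t ⊆ Icc c d ∧ f '' Icc s t = Icc u v := by
  obtain ⟨x, hx, hfx⟩ := hu
  obtain ⟨y, hy, hfy⟩ := hv
  suffices ∃ s t, s ≤ t ∧ Icc s t ⊆ Icc c d ∧ f '' Icc s t = Icc u v by
    obtain ⟨s, t, hst, hsub, himg⟩ := this
    refine ⟨s, t, hst.lt_of_ne ?_, hsub, himg⟩
    rintro rfl
    rw [Icc_self, image_singleton, eq_comm, Icc_eq_singleton_iff] at himg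
    exact huv.ne (himg.1.trans himg.2.symm)
  rcases le_total x y with hxy | hyx
  · obtain ⟨s, t, hxs, hst, hty, himg⟩ := exists_Icc_subset_image_eq_Icc_of_le
      (hf.mono (Icc_subset_Icc hx.1 hy.2)) hxy hfx hfy huv.le
    exact ⟨s, t, hst, Icc_subset_Icc (hx.1.trans hxs) (hty.trans hy.2), himg⟩
  · have hg : ContinuousOn (fun z => f (-z)) (Icc (-x) (-y)) :=
      hf.comp continuousOn_neg fun z hz => ⟨by linarith [hz.2, hy.1], by linarith [hz.1, hx.2]⟩
    obtain ⟨s, t, hxs, hst, hty, himg⟩ := exists_Icc_subset_image_eq_Icc_of_le hg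
      (neg_le_neg hyx) (by simpa using hfx) (by simpa using hfy) huv.le
    refine ⟨-t, -s, neg_le_neg hst,
      Icc_subset_Icc (by linarith [hy.1]) (by linarith [hx.2]), ?_⟩
    rw [← image_neg_Icc, image_image, himg]

lemma exists_seq_Icc_image_succ_eq {f : ℝ → ℝ} {p q : ℝ} (hf : ContinuousOn f (Icc p q))
    (hpq : p < q) (hcov : Icc p q ⊆ f '' Icc p q) :
    ∃ l r : ℕ → ℝ, ∀ n, p ≤ l n ∧ l n < r n ∧ r n ≤ q ∧
      f '' Icc (l (n + 1)) (r (n + 1)) = Icc (l n) (r n) := by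
  let I := {x : ℝ × ℝ // p ≤ x.1 ∧ x.1 < x.2 ∧ x.2 ≤ q}
  have hpull : ∀ x : I, ∃ y : I, f '' Icc y.1.1 y.1.2 = Icc x.1.1 x.1.2 := by
    rintro ⟨⟨u, v⟩, hpu, huv, hvq⟩
    obtain ⟨s, t, hst, hsub, himg⟩ := hf.exists_Icc_subset_image_eq_Icc huv
      (hcov ⟨hpu, huv.le.trans hvq⟩) (hcov ⟨hpu.trans huv.le, hvq⟩)
    exact ⟨⟨(s, t), (hsub (left_mem_Icc.2 hst.le)).1, hst, (hsub (right_mem_Icc.2 hst.le)).2⟩,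
      himg⟩
  choose pull hpull using hpull
  let T : ℕ → I := fun n => pull^[n] ⟨(p, q), le_rfl, hpq, le_rfl⟩
  refine ⟨fun n => (T n).1.1, fun n => (T n).1.2,
    fun n => ⟨(T n).2.1, (T n).2.2.1, (T n).2.2.2, ?_⟩⟩
  simp only [T, Function.iterate_succ_apply']
  exact hpull _

lemma splittingSeq_of_Icc_subset_image {f : ℝ → ℝ} {a b p q : ℝ}
    (hf : ContinuousOn f (Icc 0 1)) (ha : 0 ≤ a) (hbp : b ≤ p) (hp : 0 < p) (hpq : p < q)
    (hq : q ≤ 1) (hself : Icc p q ⊆ f '' Icc p q) (hab : Icc p q ⊆ f '' Icc a b) :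
    SplittingSeq f := by
  have hab01 : Icc a b ⊆ Icc 0 1 := Icc_subset_Icc ha (hbp.trans (hpq.le.trans hq))
  obtain ⟨l, r, hT⟩ :=
    exists_seq_Icc_image_succ_eq (hf.mono (Icc_subset_Icc hp.le hq)) hpq hself
  have hS : ∀ n, ∃ s t, s < t ∧ Icc s t ⊆ Icc a b ∧ f '' Icc s t = Icc (l n) (r n) :=
    fun n => (hf.mono hab01).exists_Icc_subset_image_eq_Icc (hT n).2.1
      (hab ⟨(hT n).1, (hT n).2.1.le.trans (hT n).2.2.1⟩)
      (hab ⟨(hT n).1.trans (hT n).2.1.le, (hT n).2.2.1⟩)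
  choose s t hS using hS
  -- `S n` is chosen with `f (S n) = T (n - 1) = f (T n)`, hence only for `n ≥ 1`.
  refine ⟨l, r, Ici 1, fun n => Icc (s (n - 1)) (t (n - 1)), fun n => (hT n).2.1.le,
    fun n => Icc_subset_Icc (hp.le.trans (hT n).1) ((hT n).2.2.1.trans hq), fun n h => ?_,
    fun n => (hT n).2.2.2, ⟨0, fun n _ => (hT n).2.1⟩, Ici_infinite 1,
    fun n hn => ⟨⟨_, _, (hS _).1, rfl⟩, (hS _).2.1.trans hab01, ?_, ?_⟩⟩
  · have hl0 := ((Icc_eq_Icc_iff (hT n).2.1.le).1 h).1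
    linarith [(hT n).1]
  · rintro z ⟨hzS, hzT⟩
    exact Or.inl (le_antisymm (((hS _).2.1 hzS).2.trans (hbp.trans (hT n).1)) hzT.1)
  · rw [(hS _).2.2, ← (hT (n - 1)).2.2.2, Nat.sub_add_cancel hn]

theorem stmt_7_general (f : ℝ → ℝ) (hf : ContinuousOn f (Icc 0 1))
    (hns : ¬ SplittingSeq f)
    (a b : ℝ)
    (ha : IsGreatest {x ∈ Icc (0:ℝ) 1 | f x = 0} a)
    (hb : IsLeast {x ∈ Icc (0:ℝ) 1 | f x = 1} b)
    (hab : a < b) :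
    ¬ ∃ p q : ℝ, p ∈ Icc b 1 ∧ q ∈ Icc b 1 ∧ p ≠ q ∧ f p = q ∧ f q = p := by
  rintro ⟨p, q, hp, hq, hne, hfp, hfq⟩
  obtain ⟨⟨ha01, hfa⟩, -⟩ := ha
  obtain ⟨⟨hb01, hfb⟩, -⟩ := hb
  have hcov : Icc 0 1 ⊆ f '' Icc a b := by
    simpa only [hfa, hfb] using
      intermediate_value_Icc hab.le (hf.mono (Icc_subset_Icc ha01.1 hb01.2))
  wlog hlt : p < q generalizing p q
  · exact this q p hq hp hne.symm hfq hfp (hne.lt_or_gt.resolve_left hlt)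
  have hp0 : 0 < p := ha01.1.trans_lt (hab.trans_le hp.1)
  have hpq01 : Icc p q ⊆ Icc 0 1 := Icc_subset_Icc hp0.le hq.2
  have hself : Icc p q ⊆ f '' Icc p q := by
    simpa only [hfp, hfq] using intermediate_value_Icc' hlt.le (hf.mono hpq01)
  exact hns (splittingSeq_of_Icc_subset_image hf ha01.1 hp.1 hp0 hlt hq.2 hself
    (hpq01.trans hcov))

theorem stmt_7 (f : ℝ → ℝ) (hf : ContinuousOn f (Icc 0 1))
    (hsurj : f '' Icc 0 1 = Icc 0 1) (hns : ¬ SplittingSeq f)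
    (a b : ℝ)
    (ha : IsGreatest {x ∈ Icc (0:ℝ) 1 | f x = 0} a)
    (hb : IsLeast {x ∈ Icc (0:ℝ) 1 | f x = 1} b)
    (hab : a < b) :
    ¬ ∃ p q : ℝ, p ∈ Icc b 1 ∧ q ∈ Icc b 1 ∧ p ≠ q ∧ f p = q ∧ f q = p :=
  stmt_7_general f hf hns a b ha hb hab
end

section
/- Let f : [0,1] → [0,1] be the tent map defined by f(x) = 2x for x ≤ 1/2 and f(x) = 2 - 2x for x ≥ 1/2. Then f admits a splitting sequence. -/
open Set Filter Topology

/-! Take `T n = [0, 2^-(n+1)]`, pulled back along the increasing branch of the tent map, and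
`S n = [1 - 2^-(n+1), 1]`, its mirror image under `x ↦ 1 - x`; the tent map is invariant under
this reflection, so `f (S n) = f (T n)`, while `S n` and `T n` lie on opposite sides of `1/2`. -/

noncomputable def tent (x : ℝ) : ℝ := if x ≤ 1/2 then 2*x else 2 - 2*x

lemma tent_one_sub (x : ℝ) : tent (1 - x) = tent x := by
  unfold tent; split_ifs <;> linarith

lemma tent_image_Icc_zero {a : ℝ} (h0 : 0 ≤ a) (ha : a ≤ 1/2) :
    tent '' Icc 0 a = Icc 0 (2*a) := by
  have : EqOn tent (2 * ·) (Icc 0 a) := fun x hx => if_pos (hx.2.trans ha)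
  rw [this.image_eq, image_mul_left_Icc zero_le_two h0, mul_zero]

lemma tent_image_Icc_one {a : ℝ} (h0 : 0 ≤ a) (ha : a ≤ 1/2) :
    tent '' Icc (1 - a) 1 = Icc 0 (2*a) := by
  have : Icc (1 - a) 1 = (1 - ·) '' Icc 0 a := by rw [image_const_sub_Icc, sub_zero]
  rw [this, image_image]
  simp only [tent_one_sub]
  exact tent_image_Icc_zero h0 ha

theorem stmt_9 :
    SplittingSeq (fun x : ℝ => if x ≤ 1/2 then 2*x else 2 - 2*x) := by
  show SplittingSeq tent
  set r : ℕ → ℝ := fun n => (1/2) ^ (n + 1)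
  have hr_pos (n : ℕ) : 0 < r n := by positivity
  have hr_le (n : ℕ) : r n ≤ 1/2 := pow_le_of_le_one (by norm_num) (by norm_num) n.succ_ne_zero
  have hr_succ (n : ℕ) : 2 * r (n + 1) = r n := by simp only [r, pow_succ]; ring
  refine ⟨fun _ => 0, r, univ, fun n => Icc (1 - r n) 1, fun n => (hr_pos n).le,
    fun n => Icc_subset_Icc le_rfl (by linarith [hr_le n]), fun n h => ?_,
    fun n => by rw [tent_image_Icc_zero (hr_pos _).le (hr_le _), hr_succ],
    ⟨0, fun n _ => hr_pos n⟩, infinite_univ, fun n _ => ?_⟩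
  · have : (1:ℝ) ≤ r n := (h ▸ right_mem_Icc.2 zero_le_one : (1:ℝ) ∈ Icc 0 (r n)).2
    linarith [hr_le n]
  refine ⟨⟨1 - r n, 1, by linarith [hr_pos n], rfl⟩, Icc_subset_Icc (by linarith [hr_le n]) le_rfl,
    ?_, ?_⟩
  · rintro x ⟨⟨hx, -⟩, -, hxr⟩
    exact Or.inr (le_antisymm hxr (by linarith [hr_le n]))
  · rw [tent_image_Icc_zero (hr_pos n).le (hr_le n), tent_image_Icc_one (hr_pos n).le (hr_le n)]
end

section
/- Let f : [0,1] → [0,1] be the piecewise linear map with f(x) = 2x for x ∈ [0, 1/2] and f linear from (1/2, 1) to (1, 3/4), i.e., f(x) = 1 - (x - 1/2)/2 for x ∈ [1/2, 1]. Then for every point x = (x_n) of the inverse limit Lf := {(x_n) ∈ [0,1]^ℕ : f(x_{n+1}) = x_n} with x_0 ≠ 5/6 (the fixed point of f in [1/2,1]), the sequence x_n converges to 0. -/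
open Set Filter Topology

theorem stmt_10 (f : ℝ → ℝ)
    (hdef : ∀ x ∈ Icc (0:ℝ) 1, f x = if x ≤ 1/2 then 2*x else 1 - (x - 1/2)/2) :
    ∀ x : ℕ → ℝ, (∀ n, x n ∈ Icc (0:ℝ) 1) → (∀ n, f (x (n+1)) = x n) →
      x 0 ≠ 5/6 → Tendsto x atTop (𝓝 0) := by
  intro x hx hf h0
  have stepA : ∀ n, x n < 3/4 → x (n+1) = x n / 2 := by
    intro n hn
    have h1 := hf n
    rw [hdef _ (hx (n+1))] at h1
    rcases hx (n+1) with ⟨ha, hb⟩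
    split_ifs at h1 with h
    · linarith
    · push_neg at h; linarith
  have key : ∃ m, x m < 3/4 := by
    by_contra hc
    push_neg at hc
    have stepB : ∀ n, x (n+1) - 5/6 = -2 * (x n - 5/6) := by
      intro n
      have h1 := hf n
      rw [hdef _ (hx (n+1))] at h1
      have h2 := hc (n+1)
      split_ifs at h1 with h
      · linarith
      · linarith
    have habs : ∀ n, |x n - 5/6| = 2^n * |x 0 - 5/6| := by
      intro n
      induction n with
      | zero => simp
      | succ k ih =>
        rw [stepB k, abs_mul, ih]
        have h2 : |(-2:ℝ)| = 2 := by norm_num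
        rw [h2, pow_succ]; ring
    have hb : ∀ n, |x n - 5/6| ≤ 1/4 := by
      intro n
      rcases hx n with ⟨ha, hb⟩
      have := hc n
      rw [abs_le]; constructor <;> linarith
    have hpos : 0 < |x 0 - 5/6| := abs_pos.2 (sub_ne_zero.2 h0)
    obtain ⟨n, hn⟩ := pow_unbounded_of_one_lt ((1/4)/|x 0 - 5/6|) (by norm_num : (1:ℝ) < 2)
    have h3 : (1:ℝ)/4 < 2^n * |x 0 - 5/6| := (div_lt_iff₀ hpos).mp hn
    have h4 := habs n
    have h5 := hb n
    linarith
  obtain ⟨m, hm⟩ := key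
  have hrec : ∀ k, x (m + k) = x m * (1/2)^k ∧ x (m + k) < 3/4 := by
    intro k
    induction k with
    | zero => constructor <;> simp [hm]
    | succ j ih =>
      have h1 := stepA (m+j) ih.2
      have he : m + (j+1) = (m+j) + 1 := rfl
      constructor
      · rw [he, h1, ih.1, pow_succ]; ring
      · rw [he, h1]; linarith [ih.2]
  have ht : Tendsto (fun k => x m * (1/2:ℝ)^k) atTop (𝓝 0) := by
    have h := tendsto_pow_atTop_nhds_zero_of_lt_one (by norm_num : (0:ℝ) ≤ 1/2)
      (by norm_num : (1/2:ℝ) < 1)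
    simpa using h.const_mul (x m)
  have ht2 : Tendsto (fun k => x (m + k)) atTop (𝓝 0) :=
    ht.congr (fun k => ((hrec k).1).symm)
  exact (tendsto_add_atTop_iff_nat m).mp (by simpa [Nat.add_comm] using ht2)
end

section
/- Let f : [0,1] → [0,1] be continuous, surjective, and not admitting a splitting sequence. Suppose d is an M-type fixed point of f witnessed by (c, e), i.e., c < d < e, d is the unique fixed point in (c, e), c = 0 or c is a fixed point, e = 1 or e is a fixed point, and f(x) ≥ x for all x ∈ [c, e]. Then c and e are fixed points of f, and max f([0, d]) = d. -/
/-!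
Because `f d = d` and `f x ≥ x` on `[d, e]`, first hitting times pulled back from any
`B ∈ (d, e]` give points `r n ∈ (d, B]` with `f [d, r (n+1)] = [d, r n]`: a tight sequence.
An interval `[a, b]` on the far side of `d` or of `e` with `f a ≥ B` and `f b ≤ d` contains
subintervals mapped onto every `[d, r n]`, and these split it. A point `x ≤ d` with `f x > d`
gives such an interval `[x, d]`; so does `c = 0` with `f 0 > 0`, since a preimage `z` of `0`
must then lie beyond `e`, and `[e, z]` works.
-/

open Set Filter Topology

section Hitting

variable {α δ : Type*} [ConditionallyCompleteLinearOrder α] [TopologicalSpace α] [OrderTopology α]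
  [DenselyOrdered α] [LinearOrder δ] [TopologicalSpace δ] [OrderClosedTopology δ]
  {f : α → δ} {a b : α} {t : δ}

theorem ContinuousOn.exists_eq_forall_Icc_left_le (hab : a ≤ b) (hf : ContinuousOn f (Icc a b))
    (ha : f a ≤ t) (hb : t ≤ f b) : ∃ v ∈ Icc a b, f v = t ∧ ∀ x ∈ Icc a v, f x ≤ t := by
  have hclosed : IsClosed (Icc a b ∩ f ⁻¹' {t}) :=
    hf.preimage_isClosed_of_isClosed isClosed_Icc isClosed_singleton
  obtain ⟨y, hy, hfy⟩ := intermediate_value_Icc hab hf ⟨ha, hb⟩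
  obtain ⟨v, ⟨hv, hfv⟩, hleast⟩ :=
    (isCompact_Icc.of_isClosed_subset hclosed inter_subset_left).exists_isLeast ⟨y, hy, hfy⟩
  refine ⟨v, hv, hfv, fun x hx => le_of_not_gt fun hlt => ?_⟩
  have hxb : x ≤ b := hx.2.trans hv.2
  obtain ⟨z, hz, hfz⟩ :=
    intermediate_value_Icc hx.1 (hf.mono (Icc_subset_Icc_right hxb)) ⟨ha, hlt.le⟩
  have hzx : z = x := le_antisymm hz.2 (hx.2.trans (hleast ⟨⟨hz.1, hz.2.trans hxb⟩, hfz⟩))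
  exact hlt.ne' (hzx ▸ hfz)

theorem ContinuousOn.exists_eq_forall_Icc_left_ge (hab : a ≤ b) (hf : ContinuousOn f (Icc a b))
    (ha : t ≤ f a) (hb : f b ≤ t) : ∃ v ∈ Icc a b, f v = t ∧ ∀ x ∈ Icc a v, t ≤ f x :=
  ContinuousOn.exists_eq_forall_Icc_left_le (δ := δᵒᵈ) hab hf ha hb

theorem ContinuousOn.exists_eq_forall_Icc_right_le (hab : a ≤ b) (hf : ContinuousOn f (Icc a b))
    (ha : t ≤ f a) (hb : f b ≤ t) : ∃ u ∈ Icc a b, f u = t ∧ ∀ x ∈ Icc u b, f x ≤ t := by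
  have := ContinuousOn.exists_eq_forall_Icc_left_le (α := αᵒᵈ) (f := f ∘ OrderDual.ofDual)
    (a := OrderDual.toDual b) (b := OrderDual.toDual a) hab (by rwa [Icc_toDual]) hb ha
  simpa [Icc_toDual, and_comm] using this

theorem ContinuousOn.exists_Icc_subset_image_eq_Icc_s12 (hab : a ≤ b) (hf : ContinuousOn f (Icc a b))
    {A B : δ} (hAB : A < B) (ha : B ≤ f a) (hb : f b ≤ A) :
    ∃ u v, a ≤ u ∧ u < v ∧ v ≤ b ∧ f '' Icc u v = Icc A B := by
  obtain ⟨v, hv, hfv, hAle⟩ := hf.exists_eq_forall_Icc_left_ge hab (hAB.le.trans ha) hb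
  obtain ⟨u, hu, hfu, hleB⟩ :=
    (hf.mono (Icc_subset_Icc_right hv.2)).exists_eq_forall_Icc_right_le hv.1 ha
      (hfv.trans_le hAB.le)
  have huv : u < v := hu.2.lt_of_ne fun h => hAB.ne' (hfu.symm.trans (h ▸ hfv))
  refine ⟨u, v, hu.1, huv, hv.2, Subset.antisymm ?_ ?_⟩
  · exact MapsTo.image_subset fun x hx => ⟨hAle x ⟨hu.1.trans hx.1, hx.2⟩, hleB x hx⟩
  · simpa [hfu, hfv] using intermediate_value_Icc' huv.le (hf.mono (Icc_subset_Icc hu.1 hv.2))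

end Hitting

section

variable {α : Type*} [ConditionallyCompleteLinearOrder α] [TopologicalSpace α] [OrderTopology α]
  [DenselyOrdered α] {f : α → α} {d e : α}

theorem exists_image_Icc_eq_Icc_of_le_apply (hf : ContinuousOn f (Icc d e)) (hfd : f d = d)
    (hle : ∀ x ∈ Icc d e, x ≤ f x) {t : α} (hdt : d < t) (hte : t ≤ e) :
    ∃ s ∈ Ioc d t, f '' Icc d s = Icc d t := by
  have hde := hdt.le.trans hte
  obtain ⟨s, hs, hfs, hle_t⟩ := hf.exists_eq_forall_Icc_left_le hde (hfd.trans_le hdt.le)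
    (hte.trans (hle e ⟨hde, le_rfl⟩))
  have hds : d < s := hs.1.lt_of_ne fun h => hdt.ne (hfd.symm.trans (h ▸ hfs))
  refine ⟨s, ⟨hds, hfs ▸ hle s hs⟩, Subset.antisymm ?_ ?_⟩
  · exact MapsTo.image_subset fun x hx =>
      ⟨hx.1.trans (hle x ⟨hx.1, hx.2.trans hs.2⟩), hle_t x hx⟩
  · simpa [hfd, hfs] using intermediate_value_Icc hds.le (hf.mono (Icc_subset_Icc_right hs.2))

theorem exists_seq_image_Icc_succ_eq (hf : ContinuousOn f (Icc d e)) (hfd : f d = d)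
    (hle : ∀ x ∈ Icc d e, x ≤ f x) {B : α} (hdB : d < B) (hBe : B ≤ e) :
    ∃ r : ℕ → α, ∀ n, r n ∈ Ioc d B ∧ f '' Icc d (r (n + 1)) = Icc d (r n) := by
  have hstep : ∀ t ∈ Ioc d B, ∃ s ∈ Ioc d B, f '' Icc d s = Icc d t := fun t ht => by
    obtain ⟨s, hs, himg⟩ := exists_image_Icc_eq_Icc_of_le_apply hf hfd hle ht.1 (ht.2.trans hBe)
    exact ⟨s, ⟨hs.1, hs.2.trans ht.2⟩, himg⟩
  choose! g hg hgimg using hstep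
  have hmem n : g^[n] B ∈ Ioc d B := MapsTo.iterate hg n ⟨hdB, le_rfl⟩
  refine ⟨fun n => g^[n] B, fun n => ⟨hmem n, ?_⟩⟩
  simpa only [Function.iterate_succ_apply'] using hgimg _ (hmem n)

end

theorem splittingSeq_of_image_Icc_succ_eq {f : ℝ → ℝ} {a b d B : ℝ} {r : ℕ → ℝ}
    (hf : ContinuousOn f (Icc a b)) (hab : a ≤ b) (ha0 : 0 ≤ a) (hb1 : b ≤ 1)
    (hd0 : 0 < d) (hr1 : ∀ n, r n ≤ 1)
    (hr : ∀ n, r n ∈ Ioc d B ∧ f '' Icc d (r (n + 1)) = Icc d (r n))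
    (hfa : B ≤ f a) (hfb : f b ≤ d) (hdisj : b ≤ d ∨ ∀ n, r n ≤ a) :
    SplittingSeq f := by
  have hS n : ∃ u v, a ≤ u ∧ u < v ∧ v ≤ b ∧ f '' Icc u v = Icc d (r n) :=
    hf.exists_Icc_subset_image_eq_Icc_s12 hab (hr n).1.1 ((hr n).1.2.trans hfa) hfb
  choose u v hu huv hv hSimg using hS
  refine ⟨fun _ => d, fun n => r (n + 1), univ, fun n => Icc (u n) (v n),
    fun n => (hr (n + 1)).1.1.le, fun n => Icc_subset_Icc hd0.le (hr1 (n + 1)),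
    fun n h => hd0.not_ge (h ▸ left_mem_Icc.2 zero_le_one).1, fun n => (hr (n + 1)).2,
    ⟨0, fun n _ => (hr (n + 1)).1.1⟩, infinite_univ, fun n _ => ⟨⟨u n, v n, huv n, rfl⟩,
      Icc_subset_Icc (ha0.trans (hu n)) ((hv n).trans hb1), ?_, by rw [hSimg, (hr n).2]⟩⟩
  rintro x ⟨hxS, hxT⟩
  rcases hdisj with hbd | hra
  · exact Or.inl (le_antisymm (hxS.2.trans ((hv n).trans hbd)) hxT.1)
  · exact Or.inr (le_antisymm hxT.2 ((hra _).trans ((hu n).trans hxS.1)))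

theorem splittingSeq_of_le_apply {f : ℝ → ℝ} {a b d e B : ℝ} (hf : ContinuousOn f (Icc 0 1))
    (hd0 : 0 < d) (he1 : e ≤ 1) (hfd : f d = d) (hle : ∀ x ∈ Icc d e, x ≤ f x)
    (hdB : d < B) (hBe : B ≤ e) (hab : a ≤ b) (ha0 : 0 ≤ a) (hb1 : b ≤ 1)
    (hfa : B ≤ f a) (hfb : f b ≤ d) (hdisj : b ≤ d ∨ e ≤ a) : SplittingSeq f := by
  obtain ⟨r, hr⟩ :=
    exists_seq_image_Icc_succ_eq (hf.mono (Icc_subset_Icc hd0.le he1)) hfd hle hdB hBe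
  have hre n : r n ≤ e := (hr n).1.2.trans hBe
  exact splittingSeq_of_image_Icc_succ_eq (hf.mono (Icc_subset_Icc ha0 hb1)) hab ha0 hb1 hd0
    (fun n => (hre n).trans he1) hr hfa hfb (hdisj.imp_right fun hea n => (hre n).trans hea)

theorem stmt_12_general (f : ℝ → ℝ) (hf : ContinuousOn f (Icc 0 1))
    (hsurj : f '' Icc 0 1 = Icc 0 1) (hns : ¬ SplittingSeq f)
    (c d e : ℝ) (hc0 : 0 ≤ c) (hcd : c < d) (hde : d < e) (he1 : e ≤ 1)
    (hfd : f d = d)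
    (hc : c = 0 ∨ f c = c) (he : e = 1 ∨ f e = e)
    (hM : ∀ x ∈ Icc c e, x ≤ f x) :
    f c = c ∧ f e = e ∧ IsGreatest (f '' Icc 0 d) d := by
  have hce : c ≤ e := (hcd.trans hde).le
  have hd0 : 0 < d := hc0.trans_lt hcd
  have hle : ∀ x ∈ Icc d e, x ≤ f x := fun x hx => hM x ⟨hcd.le.trans hx.1, hx.2⟩
  have hfe : f e = e := by
    refine he.elim (fun he => ?_) id
    subst he
    exact le_antisymm (hsurj ▸ mem_image_of_mem f (right_mem_Icc.2 zero_le_one)).2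
      (hM 1 ⟨hce, le_rfl⟩)
  have hfc : f c = c := by
    refine hc.elim (fun hc => ?_) id
    subst hc
    obtain ⟨z, hz, hfz⟩ : (0 : ℝ) ∈ f '' Icc 0 1 := by
      rw [hsurj]; exact left_mem_Icc.2 zero_le_one
    refine le_antisymm (not_lt.1 fun hpos => ?_) (hM 0 ⟨le_rfl, hce⟩)
    -- a preimage of `0` in `[0, e)` would be a fixed point, hence `0` itself
    have hez : e ≤ z := not_lt.1 fun hze =>
      hpos.ne' (le_antisymm (hfz ▸ hM z ⟨hz.1, hze.le⟩) hz.1 ▸ hfz)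
    exact hns (splittingSeq_of_le_apply hf hd0 he1 hfd hle hde le_rfl hez (hc0.trans hce) hz.2
      hfe.ge (hfz.trans_le hd0.le) (Or.inr le_rfl))
  refine ⟨hfc, hfe, ⟨d, ⟨hd0.le, le_rfl⟩, hfd⟩, ?_⟩
  rintro _ ⟨x, hx, rfl⟩
  exact not_lt.1 fun hdx => hns (splittingSeq_of_le_apply hf hd0 he1 hfd hle (lt_min hde hdx)
    (min_le_left _ _) hx.2 hx.1 (hde.le.trans he1) (min_le_right _ _) hfd.le (Or.inl le_rfl))

theorem stmt_12 (f : ℝ → ℝ) (hf : ContinuousOn f (Icc 0 1))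
    (hsurj : f '' Icc 0 1 = Icc 0 1) (hns : ¬ SplittingSeq f)
    (c d e : ℝ) (hc0 : 0 ≤ c) (hcd : c < d) (hde : d < e) (he1 : e ≤ 1)
    (hfd : f d = d) (huniq : ∀ x ∈ Ioo c e, f x = x → x = d)
    (hc : c = 0 ∨ f c = c) (he : e = 1 ∨ f e = e)
    (hM : ∀ x ∈ Icc c e, x ≤ f x) :
    f c = c ∧ f e = e ∧ IsGreatest (f '' Icc 0 d) d :=
  stmt_12_general f hf hsurj hns c d e hc0 hcd hde he1 hfd hc he hM
end

section
/- Let f : [0,1] → [0,1] be continuous, surjective, and not admitting a splitting sequence, and suppose f admits a 2-cycle {s, t} with s ∈ {0, 1}. Then a = max f⁻¹(0) and b = min f⁻¹(1) satisfy b < a. -/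
/-!
If `a ≤ b`, then in fact `a < b` and `f '' [a, b] ⊇ [0, 1]`. The 2-cycle spans an interval `J`
with endpoints `s, t` such that `J ⊆ f '' J`, and `J` lies beyond `[a, b]`: for `s = 0` the point
`t` is a zero of `f`, so `J = [0, t]` ends at or before `a`; for `s = 1` it is a preimage of `1`, so
`J = [t, 1]` starts at or after `b`. Pulling `J` back under `f` again and again gives a tight
sequence `T n ⊆ J`, and pulling each `T n` back into `[a, b]` gives intervals `S n` meeting `T n`
at most in an endpoint: a splitting sequence.
-/

open Set Filter Topology

section Pullback

variable {f : ℝ → ℝ}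

lemma isCompact_Icc_inter_preimage {x y : ℝ} (hf : ContinuousOn f (Icc x y)) (v : ℝ) :
    IsCompact {z ∈ Icc x y | f z = v} :=
  isCompact_Icc.of_isClosed_subset
    (hf.preimage_isClosed_of_isClosed isClosed_Icc isClosed_singleton) inter_subset_left

/-- `[p, q]` runs from the last hit of `u` before `q` to the first hit `q` of `v`, so `f` meets
neither `u` nor `v` strictly inside it and, by the intermediate value theorem, stays in `[u, v]`. -/
lemma exists_image_Icc_eq_Icc_of_le {x y u v : ℝ} (hxy : x ≤ y) (hf : ContinuousOn f (Icc x y))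
    (hx : f x = u) (hy : f y = v) (huv : u ≤ v) :
    ∃ p q, x ≤ p ∧ p ≤ q ∧ q ≤ y ∧ f '' Icc p q = Icc u v := by
  obtain ⟨q, ⟨⟨hxq, hqy⟩, hfq⟩, hq_min⟩ :=
    (isCompact_Icc_inter_preimage hf v).exists_isLeast ⟨y, right_mem_Icc.2 hxy, hy⟩
  have hf' : ContinuousOn f (Icc x q) := hf.mono (Icc_subset_Icc le_rfl hqy)
  obtain ⟨p, ⟨⟨hxp, hpq⟩, hfp⟩, hp_max⟩ :=
    (isCompact_Icc_inter_preimage hf' u).exists_isGreatest ⟨x, left_mem_Icc.2 hxq, hx⟩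
  refine ⟨p, q, hxp, hpq, hqy, Subset.antisymm ?_ ?_⟩
  · rintro _ ⟨z, hz, rfl⟩
    constructor
    · by_contra! hzu
      obtain ⟨w, hw, hfw⟩ := intermediate_value_Icc hz.2
        (hf'.mono (Icc_subset_Icc (hxp.trans hz.1) le_rfl)) ⟨hzu.le, hfq ▸ huv⟩
      obtain rfl : w = z :=
        le_antisymm ((hp_max ⟨⟨hxp.trans (hz.1.trans hw.1), hw.2⟩, hfw⟩).trans hz.1) hw.1
      exact hzu.ne hfw
    · by_contra! hvz
      obtain ⟨w, hw, hfw⟩ := intermediate_value_Icc hz.1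
        (hf'.mono (Icc_subset_Icc hxp hz.2)) ⟨hfp ▸ huv, hvz.le⟩
      obtain rfl : w = z :=
        le_antisymm hw.2 <| hz.2.trans <|
          hq_min ⟨⟨hxp.trans hw.1, hw.2.trans (hz.2.trans hqy)⟩, hfw⟩
      exact hvz.ne' hfw
  · simpa only [hfp, hfq] using intermediate_value_Icc hpq (hf'.mono (Icc_subset_Icc hxp le_rfl))

lemma exists_image_Icc_eq_Icc_of_subset_image {α β u v : ℝ} (hf : ContinuousOn f (Icc α β))
    (huv : u < v) (hsub : Icc u v ⊆ f '' Icc α β) :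
    ∃ p q, α ≤ p ∧ p < q ∧ q ≤ β ∧ f '' Icc p q = Icc u v := by
  obtain ⟨x, hx, hfx⟩ := hsub (left_mem_Icc.2 huv.le)
  obtain ⟨y, hy, hfy⟩ := hsub (right_mem_Icc.2 huv.le)
  obtain ⟨p, q, hp, hpq, hq, himage⟩ :
      ∃ p q, α ≤ p ∧ p ≤ q ∧ q ≤ β ∧ f '' Icc p q = Icc u v := by
    rcases le_total x y with hxy | hyx
    · obtain ⟨p, q, hxp, hpq, hqy, h⟩ := exists_image_Icc_eq_Icc_of_le hxy
        (hf.mono (Icc_subset_Icc hx.1 hy.2)) hfx hfy huv.le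
      exact ⟨p, q, hx.1.trans hxp, hpq, hqy.trans hy.2, h⟩
    · obtain ⟨p, q, hyp, hpq, hqx, h⟩ := exists_image_Icc_eq_Icc_of_le hyx
        (hf.mono (Icc_subset_Icc hy.1 hx.2)).neg (congrArg Neg.neg hfy) (congrArg Neg.neg hfx)
        (neg_le_neg huv.le)
      refine ⟨p, q, hy.1.trans hyp, hpq, hqx.trans hx.2, ?_⟩
      have hneg := congrArg (Neg.neg '' ·) h
      simpa only [image_image, Pi.neg_apply, neg_neg, image_neg_eq_neg, neg_Icc] using hneg
  refine ⟨p, q, hp, hpq.lt_of_ne ?_, hq, himage⟩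
  rintro rfl
  rw [Icc_self, image_singleton] at himage
  have hu : u ∈ ({f p} : Set ℝ) := himage ▸ left_mem_Icc.2 huv.le
  have hv : v ∈ ({f p} : Set ℝ) := himage ▸ right_mem_Icc.2 huv.le
  exact huv.ne (subsingleton_singleton hu hv)

lemma exists_seq_image_Icc_succ_eq_s15 {α β : ℝ} (hf : ContinuousOn f (Icc α β)) (hαβ : α < β)
    (hcov : Icc α β ⊆ f '' Icc α β) :
    ∃ l r : ℕ → ℝ, (∀ n, α ≤ l n ∧ l n < r n ∧ r n ≤ β) ∧
      ∀ n, f '' Icc (l (n + 1)) (r (n + 1)) = Icc (l n) (r n) := by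
  let I := {p : ℝ × ℝ // α ≤ p.1 ∧ p.1 < p.2 ∧ p.2 ≤ β}
  have step : ∀ i : I, ∃ j : I, f '' Icc j.1.1 j.1.2 = Icc i.1.1 i.1.2 := by
    rintro ⟨⟨u, v⟩, hαu, huv, hvβ⟩
    obtain ⟨p, q, hp, hpq, hq, h⟩ :=
      exists_image_Icc_eq_Icc_of_subset_image hf huv ((Icc_subset_Icc hαu hvβ).trans hcov)
    exact ⟨⟨(p, q), hp, hpq, hq⟩, h⟩
  choose g hg using step
  let U : ℕ → I := fun n => Nat.rec ⟨(α, β), le_rfl, hαβ, le_rfl⟩ (fun _ i => g i) n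
  exact ⟨fun n => (U n).1.1, fun n => (U n).1.2, fun n => (U n).2, fun n => hg (U n)⟩

lemma splittingSeq_of_Icc_subset_image_s15 {α β a b : ℝ} (hf : ContinuousOn f (Icc 0 1))
    (hαβ : α < β) (hJ : Icc α β ⊆ Icc 0 1) (hJ_ne : Icc α β ≠ Icc 0 1)
    (hJ_cov : Icc α β ⊆ f '' Icc α β) (hK : Icc a b ⊆ Icc 0 1)
    (hK_cov : Icc α β ⊆ f '' Icc a b) (hKJ : Icc a b ∩ Icc α β ⊆ {α, β}) :
    SplittingSeq f := by
  obtain ⟨l, r, hlr, himage⟩ := exists_seq_image_Icc_succ_eq_s15 (hf.mono hJ) hαβ hJ_cov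
  have hT (n : ℕ) : Icc (l n) (r n) ⊆ Icc α β := Icc_subset_Icc (hlr n).1 (hlr n).2.2
  choose p q hp hpq hq hS using fun n =>
    exists_image_Icc_eq_Icc_of_subset_image (hf.mono hK) (hlr n).2.1 ((hT n).trans hK_cov)
  refine ⟨fun n => l (n + 1), fun n => r (n + 1), univ, fun n => Icc (p n) (q n),
    fun n => (hlr _).2.1.le, fun n => (hT _).trans hJ,
    fun n h => hJ_ne (hJ.antisymm (h ▸ hT (n + 1))), fun n => himage (n + 1),
    ⟨0, fun n _ => (hlr _).2.1⟩, infinite_univ, fun n _ => ⟨⟨p n, q n, hpq n, rfl⟩,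
      (Icc_subset_Icc (hp n) (hq n)).trans hK, ?_, (hS n).trans (himage n).symm⟩⟩
  rintro x ⟨hxS, hxT⟩
  rcases hKJ ⟨Icc_subset_Icc (hp n) (hq n) hxS, hT _ hxT⟩ with rfl | rfl
  · exact .inl (le_antisymm (hlr _).1 hxT.1)
  · exact .inr (le_antisymm hxT.2 (hlr _).2.2)

end Pullback

theorem stmt_15_general (f : ℝ → ℝ) (hf : ContinuousOn f (Icc 0 1))
    (hns : ¬ SplittingSeq f)
    (s t : ℝ) (hs01 : s = 0 ∨ s = 1) (ht : t ∈ Icc (0:ℝ) 1)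
    (hst : s ≠ t) (h1 : f s = t) (h2 : f t = s)
    (a b : ℝ)
    (ha : IsGreatest {x ∈ Icc (0:ℝ) 1 | f x = 0} a)
    (hb : IsLeast {x ∈ Icc (0:ℝ) 1 | f x = 1} b) :
    b < a := by
  by_contra! hab
  obtain ⟨⟨ha01, hfa⟩, ha_max⟩ := ha
  obtain ⟨⟨hb01, hfb⟩, hb_min⟩ := hb
  have hK : Icc a b ⊆ Icc 0 1 := Icc_subset_Icc ha01.1 hb01.2
  have hK_cov : Icc 0 1 ⊆ f '' Icc a b := by
    simpa only [hfa, hfb] using intermediate_value_Icc hab (hf.mono hK)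
  have hab : a < b := hab.lt_of_ne (by rintro rfl; linarith)
  apply hns
  rcases hs01 with rfl | rfl
  · have hta : t ≤ a := ha_max ⟨ht, h2⟩
    have hJ01 : Icc 0 t ⊆ Icc 0 1 := Icc_subset_Icc le_rfl ht.2
    have hJ_cov : Icc 0 t ⊆ f '' Icc 0 t := by
      simpa only [h1, h2] using intermediate_value_Icc' ht.1 (hf.mono hJ01)
    refine splittingSeq_of_Icc_subset_image_s15 hf (ht.1.lt_of_ne hst) hJ01 (fun h => ?_) hJ_cov hK
      (hJ01.trans hK_cov)
      (fun x hx => .inr (le_antisymm hx.2.2 (hta.trans hx.1.1)))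
    linarith [(h.symm.subset (right_mem_Icc.2 zero_le_one)).2, hb01.2]
  · have hbt : b ≤ t := hb_min ⟨ht, h2⟩
    have hJ01 : Icc t 1 ⊆ Icc 0 1 := Icc_subset_Icc ht.1 le_rfl
    have hJ_cov : Icc t 1 ⊆ f '' Icc t 1 := by
      simpa only [h1, h2] using intermediate_value_Icc' ht.2 (hf.mono hJ01)
    refine splittingSeq_of_Icc_subset_image_s15 hf (ht.2.lt_of_ne hst.symm) hJ01 (fun h => ?_) hJ_cov
      hK (hJ01.trans hK_cov)
      (fun x hx => .inl (le_antisymm (hx.1.2.trans hbt) hx.2.1))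
    linarith [(h.symm.subset (left_mem_Icc.2 zero_le_one)).1, ha01.1]

theorem stmt_15 (f : ℝ → ℝ) (hf : ContinuousOn f (Icc 0 1))
    (hsurj : f '' Icc 0 1 = Icc 0 1) (hns : ¬ SplittingSeq f)
    (s t : ℝ) (hs01 : s = 0 ∨ s = 1) (ht : t ∈ Icc (0:ℝ) 1)
    (hst : s ≠ t) (h1 : f s = t) (h2 : f t = s)
    (a b : ℝ)
    (ha : IsGreatest {x ∈ Icc (0:ℝ) 1 | f x = 0} a)
    (hb : IsLeast {x ∈ Icc (0:ℝ) 1 | f x = 1} b) :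
    b < a :=
  stmt_15_general f hf hns s t hs01 ht hst h1 h2 a b ha hb
end

section
/- Let f : [0,1] → [0,1] be continuous and surjective, and suppose there exist three points x_i < x_j < x_k in a single periodic orbit of f such that f(x_j) > max(f(x_i), f(x_k)) or f(x_j) < min(f(x_i), f(x_k)). Then f admits a splitting sequence. -/
open Set Filter Topology

/-!
Let `a < b < c` be the three orbit points, with `f b ∉ [[f a, f c]]`, and let `s ∈ {a, c}` be
the point whose image lies between `f b` and the image of the other point `t`. For
`J = [[f s, f b]]`, `X = [[s, b]]` and `Y = [[b, t]]` the intermediate value theorem gives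
`J ⊆ f X`, `J ⊆ f Y`, and, since `f^[m-1]` sends `f s, f b` back to `s, b`, also
`X ⊆ f^[m-1] J`. Pulling back once around the loop `J → X → J` over and over gives closed
intervals `D q ⊆ J` with `f^[m] (D (q+1)) = D q` and `f^[m-1] (D (q+1)) ⊆ X`. Unrolled into
single steps of `f` they form a tight sequence; at each visit `T ⊆ X` it is split by an interval
`S ⊆ Y` with `f S = f T`, because `X` and `Y` meet only in an endpoint of `X`.
-/

open Function

theorem mem_uIcc_or_mem_uIcc_of_notMem_uIcc {δ : Type*} [LinearOrder δ] {p q y : δ}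
    (hy : y ∉ uIcc p q) : p ∈ uIcc y q ∨ q ∈ uIcc p y := by
  simp only [mem_uIcc] at *
  grind

theorem mem_pair_of_Icc_subset_uIcc {α : Type*} [LinearOrder α] {l r x₁ x₂ z : α}
    (hT : Icc l r ⊆ uIcc x₁ x₂) (hz : z ∈ Icc l r) (hzx : z ∈ ({x₁, x₂} : Set α)) :
    z ∈ ({l, r} : Set α) := by
  have hl := hT (left_mem_Icc.2 (hz.1.trans hz.2))
  have hr := hT (right_mem_Icc.2 (hz.1.trans hz.2))
  simp only [mem_uIcc, mem_Icc, mem_insert_iff, mem_singleton_iff] at *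
  grind

theorem exists_seq_of_forall_exists {β : Type*} {P : β → Prop} {R : β → β → Prop}
    {x₀ : β} (h₀ : P x₀) (h : ∀ x, P x → ∃ y, P y ∧ R x y) :
    ∃ x : ℕ → β, x 0 = x₀ ∧ ∀ n, P (x n) ∧ R (x n) (x (n + 1)) := by
  have : Nonempty β := ⟨x₀⟩
  choose! g hgP hgR using h
  have hP : ∀ n, P (g^[n] x₀) := fun n => by
    induction n with
    | zero => exact h₀
    | succ n ih => rw [iterate_succ_apply']; exact hgP _ ih
  refine ⟨fun n => g^[n] x₀, rfl, fun n => ⟨hP n, ?_⟩⟩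
  simp only [iterate_succ_apply']
  exact hgR _ (hP n)

section Pullback

variable {α δ : Type*} [ConditionallyCompleteLinearOrder α] [TopologicalSpace α]
  [OrderTopology α] [DenselyOrdered α] [LinearOrder δ] [TopologicalSpace δ]
  [OrderClosedTopology δ]

theorem uIcc_subset_image_Icc {g : α → δ} {a b : α} (hab : a ≤ b)
    (hg : ContinuousOn g (Icc a b)) : uIcc (g a) (g b) ⊆ g '' Icc a b := by
  rw [← uIcc_of_le hab] at hg ⊢
  exact intermediate_value_uIcc hg

theorem exists_Icc_subset_Icc_image_eq_uIcc {g : α → δ} {a b : α} (hab : a ≤ b)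
    (hg : ContinuousOn g (Icc a b)) :
    ∃ a' b', a ≤ a' ∧ a' ≤ b' ∧ b' ≤ b ∧ g '' Icc a' b' = uIcc (g a) (g b) := by
  -- `b'` is the first time `g` takes the value `g b`, and `a'` the last time before `b'` that
  -- it takes the value `g a`; in between, `g` cannot leave `[[g a, g b]]` by the IVT.
  set B := Icc a b ∩ g ⁻¹' {g b}
  have hB : sInf B ∈ B := (hg.preimage_isClosed_of_isClosed isClosed_Icc isClosed_singleton)
    |>.csInf_mem ⟨b, right_mem_Icc.2 hab, rfl⟩ ⟨a, fun x hx => hx.1.1⟩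
  set b' := sInf B
  set A := Icc a b' ∩ g ⁻¹' {g a}
  have hA : sSup A ∈ A := ((hg.mono (Icc_subset_Icc_right hB.1.2)).preimage_isClosed_of_isClosed
    isClosed_Icc isClosed_singleton).csSup_mem ⟨a, left_mem_Icc.2 hB.1.1, rfl⟩
    ⟨b', fun x hx => hx.1.2⟩
  set a' := sSup A
  have hga' : g a' = g a := hA.2
  have hgb' : g b' = g b := hB.2
  have hsub : Icc a' b' ⊆ Icc a b := Icc_subset_Icc hA.1.1 hB.1.2
  refine ⟨a', b', hA.1.1, hA.1.2, hB.1.2, subset_antisymm ?_ ?_⟩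
  · rintro _ ⟨x, hx, rfl⟩
    by_contra hout
    rw [← hga', ← hgb'] at hout
    rcases mem_uIcc_or_mem_uIcc_of_notMem_uIcc hout with h | h
    · obtain ⟨y, hy, hgy⟩ :=
        uIcc_subset_image_Icc hx.2 (hg.mono ((Icc_subset_Icc_left hx.1).trans hsub)) h
      have hya' : y ≤ a' := le_csSup ⟨b', fun z hz => hz.1.2⟩
        ⟨⟨(hsub hx).1.trans hy.1, hy.2⟩, hgy.trans hga'⟩
      obtain rfl : x = y := le_antisymm hy.1 (hya'.trans hx.1)
      exact hout (hgy ▸ left_mem_uIcc)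
    · obtain ⟨y, hy, hgy⟩ :=
        uIcc_subset_image_Icc hx.1 (hg.mono ((Icc_subset_Icc_right hx.2).trans hsub)) h
      have hb'y : b' ≤ y := csInf_le ⟨a, fun z hz => hz.1.1⟩
        ⟨⟨hA.1.1.trans hy.1, hy.2.trans (hsub hx).2⟩, hgy.trans hgb'⟩
      obtain rfl : x = y := le_antisymm (hx.2.trans hb'y) hy.2
      exact hout (hgy ▸ right_mem_uIcc)
  · rw [← hga', ← hgb']
    exact uIcc_subset_image_Icc hA.1.2 (hg.mono hsub)

theorem exists_Icc_subset_image_eq_Icc {g : α → δ} {s : Set α} (hs : s.OrdConnected)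
    (hg : ContinuousOn g s) {c d : δ} (hcd : c < d) (hc : c ∈ g '' s) (hd : d ∈ g '' s) :
    ∃ a b, a < b ∧ Icc a b ⊆ s ∧ g '' Icc a b = Icc c d := by
  obtain ⟨x, hx, rfl⟩ := hc
  obtain ⟨y, hy, rfl⟩ := hd
  obtain ⟨a, b, hab, hsub, himg⟩ :
      ∃ a b, a ≤ b ∧ Icc a b ⊆ s ∧ g '' Icc a b = uIcc (g x) (g y) := by
    rcases le_total x y with hxy | hyx
    · obtain ⟨a, b, hxa, hab, hby, himg⟩ :=
        exists_Icc_subset_Icc_image_eq_uIcc hxy (hg.mono (hs.out hx hy))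
      exact ⟨a, b, hab, (Icc_subset_Icc hxa hby).trans (hs.out hx hy), himg⟩
    · obtain ⟨a, b, hya, hab, hbx, himg⟩ :=
        exists_Icc_subset_Icc_image_eq_uIcc hyx (hg.mono (hs.out hy hx))
      exact ⟨a, b, hab, (Icc_subset_Icc hya hbx).trans (hs.out hy hx),
        himg.trans (uIcc_comm _ _)⟩
  rw [uIcc_of_le hcd.le] at himg
  refine ⟨a, b, hab.lt_of_ne ?_, hsub, himg⟩
  rintro rfl
  rw [Icc_self, image_singleton, eq_comm, Icc_eq_singleton_iff] at himg
  exact hcd.ne (himg.1.trans himg.2.symm)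

theorem exists_Icc_subset_image_comp_eq {g : α → δ} {h : α → α} {J X : Set α} {c d : δ}
    (hJ : J.OrdConnected) (hX : X.OrdConnected) (hg : ContinuousOn g X) (hh : ContinuousOn h J)
    (hcdX : Icc c d ⊆ g '' X) (hXJ : X ⊆ h '' J) (hcd : c < d) :
    ∃ a b, a < b ∧ Icc a b ⊆ J ∧ h '' Icc a b ⊆ X ∧ g '' (h '' Icc a b) = Icc c d := by
  obtain ⟨p, q, hpq, hpX, hgpq⟩ := exists_Icc_subset_image_eq_Icc hX hg hcd
    (hcdX (left_mem_Icc.2 hcd.le)) (hcdX (right_mem_Icc.2 hcd.le))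
  obtain ⟨a, b, hab, haJ, hhab⟩ := exists_Icc_subset_image_eq_Icc hJ hh hpq
    (hXJ (hpX (left_mem_Icc.2 hpq.le))) (hXJ (hpX (right_mem_Icc.2 hpq.le)))
  exact ⟨a, b, hab, haJ, hhab ▸ hpX, by rw [hhab, hgpq]⟩

theorem exists_seq_Icc_pullback_loop {f : α → α} {K : ℕ} {J X : Set α} (hJ : J.OrdConnected)
    (hX : X.OrdConnected) (hfX : ContinuousOn f X) (hfJ : ContinuousOn f^[K] J)
    (hJX : J ⊆ f '' X) (hXJ : X ⊆ f^[K] '' J) {c d : α} (hcd : c < d) (hcdJ : Icc c d ⊆ J) :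
    ∃ D : ℕ → Set α, D 0 = Icc c d ∧
      ∀ q, (∃ a b, a < b ∧ D q = Icc a b ∧ D q ⊆ J) ∧
        f^[K] '' D (q + 1) ⊆ X ∧ f^[K + 1] '' D (q + 1) = D q := by
  refine exists_seq_of_forall_exists (P := fun E => ∃ a b, a < b ∧ E = Icc a b ∧ E ⊆ J)
    (R := fun E E' => f^[K] '' E' ⊆ X ∧ f^[K + 1] '' E' = E) ⟨c, d, hcd, rfl, hcdJ⟩ ?_
  rintro _ ⟨c, d, hcd, rfl, hcdJ⟩
  obtain ⟨a, b, hab, habJ, habX, himg⟩ :=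
    exists_Icc_subset_image_comp_eq hJ hX hfX hfJ (hcdJ.trans hJX) hXJ hcd
  exact ⟨Icc a b, ⟨a, b, hab, rfl, habJ⟩, habX, by rw [iterate_succ', image_comp, himg]⟩

end Pullback

theorem image_iterate_eq_of_image_succ {α : Type*} {f : α → α} {T : ℕ → Set α}
    (h : ∀ n, f '' T (n + 1) = T n) (n : ℕ) : f^[n] '' T n = T 0 := by
  induction n with
  | zero => simp
  | succ n ih => rw [iterate_succ, image_comp, h, ih]

section LoopSeq

variable {α : Type*} (f : α → α) (K : ℕ) (D : ℕ → Set α)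

/-- Unrolls a sequence with `f^[K + 1] '' D (q + 1) = D q` into single steps of `f`:
the term of index `(K + 1) * q + t`, `t ≤ K`, is `f^[K - t] '' D (q + 1)`. -/
def loopSeq (n : ℕ) : Set α := f^[K - n % (K + 1)] '' D (n / (K + 1) + 1)

variable {f K D}

theorem loopSeq_mul_add {q t : ℕ} (ht : t ≤ K) :
    loopSeq f K D ((K + 1) * q + t) = f^[K - t] '' D (q + 1) := by
  have ht' : t < K + 1 := Nat.lt_succ_of_le ht
  simp [loopSeq, Nat.mul_add_div, Nat.div_eq_of_lt ht', Nat.mod_eq_of_lt ht']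

theorem loopSeq_mul (q : ℕ) : loopSeq f K D ((K + 1) * q) = f^[K] '' D (q + 1) := by
  simpa using loopSeq_mul_add (f := f) (D := D) (q := q) K.zero_le

theorem image_loopSeq_mul (hD : ∀ q, f^[K + 1] '' D (q + 1) = D q) (q : ℕ) :
    f '' loopSeq f K D ((K + 1) * q) = D q := by
  rw [loopSeq_mul, ← image_comp, ← iterate_succ', hD]

theorem image_loopSeq_succ (hD : ∀ q, f^[K + 1] '' D (q + 1) = D q) (n : ℕ) :
    f '' loopSeq f K D (n + 1) = loopSeq f K D n := by
  obtain ⟨q, t, ht, rfl⟩ : ∃ q t, t ≤ K ∧ n = (K + 1) * q + t :=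
    ⟨n / (K + 1), n % (K + 1), Nat.le_of_lt_succ (Nat.mod_lt _ K.succ_pos),
      (Nat.div_add_mod _ _).symm⟩
  rcases ht.lt_or_eq with ht | rfl
  · rw [add_assoc, loopSeq_mul_add ht, loopSeq_mul_add ht.le, ← image_comp, ← iterate_succ']
    congr 2
    omega
  · rw [add_assoc, ← mul_add_one, image_loopSeq_mul hD, loopSeq_mul_add le_rfl, Nat.sub_self,
      iterate_zero, image_id]

end LoopSeq

section UnitInterval

variable {f : ℝ → ℝ}

theorem splittingSeq_of_tight (hsurj : f '' Icc 0 1 = Icc 0 1) {T S : ℕ → Set ℝ} {N : Set ℕ}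
    {c d : ℝ} (hT : ∀ n, T n = Icc (sInf (T n)) (sSup (T n))) (hTI : ∀ n, T n ⊆ Icc 0 1)
    (hstep : ∀ n, f '' T (n + 1) = T n) (hT0 : f '' T 0 = Icc c d) (hcd : c < d)
    (hproper : Icc c d ≠ Icc 0 1) (hN : N.Infinite)
    (hS : ∀ n ∈ N, (∃ u v : ℝ, u < v ∧ S n = Icc u v) ∧ S n ⊆ Icc 0 1 ∧
      S n ∩ T n ⊆ {sInf (T n), sSup (T n)} ∧ f '' S n = f '' T n) :
    SplittingSeq f := by
  have hback : ∀ n, f^[n + 1] '' T n = Icc c d := fun n => by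
    rw [iterate_succ', image_comp, image_iterate_eq_of_image_succ hstep, hT0]
  have hlt : ∀ n, sInf (T n) < sSup (T n) := fun n => by
    by_contra! hle
    have hTn : (T n).Subsingleton := by rw [hT n]; exact subsingleton_Icc_of_ge hle
    have hsub : (Icc c d).Subsingleton := hback n ▸ hTn.image _
    exact hcd.ne (hsub (left_mem_Icc.2 hcd.le) (right_mem_Icc.2 hcd.le))
  refine ⟨fun n => sInf (T n), fun n => sSup (T n), N, S, fun n => (hlt n).le,
    fun n => hT n ▸ hTI n, fun n hn => hproper ?_, fun n => by rw [← hT, ← hT, hstep],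
    ⟨0, fun n _ => hlt n⟩, hN, fun n hn => by rw [← hT n]; exact hS n hn⟩
  rw [← hback n, (hT n).trans hn, image_iterate_eq, iterate_fixed hsurj]

theorem splittingSeq_of_covers_s16 (hf : ContinuousOn f (Icc 0 1)) (hsurj : f '' Icc 0 1 = Icc 0 1)
    (K : ℕ) {u v x₁ x₂ y₁ y₂ : ℝ} (huv : u < v) (hX : uIcc x₁ x₂ ⊆ Icc 0 1)
    (hY : uIcc y₁ y₂ ⊆ Icc 0 1) (hJX : Icc u v ⊆ f '' uIcc x₁ x₂)
    (hJY : Icc u v ⊆ f '' uIcc y₁ y₂) (hXJ : uIcc x₁ x₂ ⊆ f^[K] '' Icc u v)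
    (hXY : uIcc x₁ x₂ ∩ uIcc y₁ y₂ ⊆ {x₁, x₂}) :
    SplittingSeq f := by
  have hmaps : MapsTo f (Icc 0 1) (Icc 0 1) := (mapsTo_image f _).mono_right hsurj.subset
  have hJ : Icc u v ⊆ Icc 0 1 := hJX.trans ((image_mono hX).trans hsurj.subset)
  -- Starting from half of `J` keeps every term of the tight sequence a proper subinterval.
  obtain ⟨D, hD0, hD⟩ := exists_seq_Icc_pullback_loop ordConnected_Icc ordConnected_uIcc
    (hf.mono hX) ((hf.iterate hmaps K).mono hJ) hJX hXJ (by linarith : u < (u + v) / 2)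
    (Icc_subset_Icc_right (by linarith))
  have hDstep : ∀ q, f^[K + 1] '' D (q + 1) = D q := fun q => (hD q).2.2
  have hS : ∀ q, ∃ a b, a < b ∧ Icc a b ⊆ uIcc y₁ y₂ ∧ f '' Icc a b = D q := by
    intro q
    obtain ⟨c, d, hcd, hDq, hDJ⟩ := (hD q).1
    rw [hDq] at hDJ ⊢
    exact exists_Icc_subset_image_eq_Icc ordConnected_uIcc (hf.mono hY) hcd
      (hJY (hDJ (left_mem_Icc.2 hcd.le))) (hJY (hDJ (right_mem_Icc.2 hcd.le)))
  choose a b hab habY hSimg using hS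
  set T := loopSeq f K D
  have hT : ∀ n, T n = Icc (sInf (T n)) (sSup (T n)) ∧ T n ⊆ Icc 0 1 := fun n => by
    obtain ⟨c, d, hcd, hDq, hDJ⟩ := (hD (n / (K + 1) + 1)).1
    rw [hDq] at hDJ
    simp only [T, loopSeq, hDq]
    exact ⟨((hf.iterate hmaps _).mono (hDJ.trans hJ)).image_Icc hcd.le,
      ((hmaps.iterate _).mono_left (hDJ.trans hJ)).image_subset⟩
  have hTX : ∀ q, T ((K + 1) * q) ⊆ uIcc x₁ x₂ := fun q => by
    simpa only [T, loopSeq_mul] using (hD q).2.1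
  refine splittingSeq_of_tight hsurj (S := fun n => Icc (a (n / (K + 1))) (b (n / (K + 1))))
    (N := range ((K + 1) * ·)) (fun n => (hT n).1) (fun n => (hT n).2)
    (image_loopSeq_succ hDstep) (by simpa [hD0] using image_loopSeq_mul hDstep 0)
    (by linarith : u < (u + v) / 2) ?_
    (infinite_range_of_injective (mul_right_injective₀ K.succ_ne_zero)) ?_
  · rw [Ne, Icc_eq_Icc_iff (by linarith)]
    rintro ⟨rfl, hv⟩
    linarith [(hJ (right_mem_Icc.2 huv.le)).2]
  · rintro _ ⟨q, rfl⟩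
    simp only [Nat.mul_div_cancel_left q K.succ_pos]
    refine ⟨⟨a q, b q, hab q, rfl⟩, (habY q).trans hY, fun z hz => ?_,
      by rw [hSimg, image_loopSeq_mul hDstep]⟩
    have hTq := (hT ((K + 1) * q)).1
    exact mem_pair_of_Icc_subset_uIcc (hTq ▸ hTX q) (hTq ▸ hz.2)
      (hXY ⟨hTX q hz.2, habY q hz.1⟩)

theorem splittingSeq_of_orbit_points (hf : ContinuousOn f (Icc 0 1))
    (hsurj : f '' Icc 0 1 = Icc 0 1) {K : ℕ} {s b t : ℝ} (hs : s ∈ Icc (0 : ℝ) 1)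
    (hb : b ∈ Icc (0 : ℝ) 1) (ht : t ∈ Icc (0 : ℝ) 1) (hs_per : IsPeriodicPt f (K + 1) s)
    (hb_per : IsPeriodicPt f (K + 1) b) (hsbt : uIcc s b ∩ uIcc b t ⊆ {s, b})
    (hfs : f s ∈ uIcc (f b) (f t)) (hne : f s ≠ f b) :
    SplittingSeq f := by
  have hmaps : MapsTo f (Icc 0 1) (Icc 0 1) := (mapsTo_image f _).mono_right hsurj.subset
  have hX := ordConnected_Icc.uIcc_subset hs hb
  have hY := ordConnected_Icc.uIcc_subset hb ht
  have hJ := ordConnected_Icc.uIcc_subset (hmaps hs) (hmaps hb)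
  refine splittingSeq_of_covers_s16 hf hsurj K (inf_lt_sup.2 hne) hX hY
    (intermediate_value_uIcc (hf.mono hX))
    ((uIcc_subset_uIcc hfs left_mem_uIcc).trans (intermediate_value_uIcc (hf.mono hY))) ?_ hsbt
  have := intermediate_value_uIcc ((hf.iterate hmaps K).mono hJ)
  rwa [← iterate_succ_apply, ← iterate_succ_apply, hs_per.eq, hb_per.eq] at this

theorem splittingSeq_of_notMem_uIcc (hf : ContinuousOn f (Icc 0 1))
    (hsurj : f '' Icc 0 1 = Icc 0 1) {K : ℕ} {a b c : ℝ} (ha : a ∈ Icc (0 : ℝ) 1)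
    (hb : b ∈ Icc (0 : ℝ) 1) (hc : c ∈ Icc (0 : ℝ) 1) (hab : a < b) (hbc : b < c)
    (ha_per : IsPeriodicPt f (K + 1) a) (hb_per : IsPeriodicPt f (K + 1) b)
    (hc_per : IsPeriodicPt f (K + 1) c) (hturn : f b ∉ uIcc (f a) (f c)) :
    SplittingSeq f := by
  rcases mem_uIcc_or_mem_uIcc_of_notMem_uIcc hturn with h | h
  · refine splittingSeq_of_orbit_points hf hsurj ha hb hc ha_per hb_per ?_ h ?_
    · rw [uIcc_of_le hab.le, uIcc_of_le hbc.le]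
      exact fun z hz => Or.inr (le_antisymm hz.1.2 hz.2.1)
    · exact fun hab' => hturn (hab' ▸ left_mem_uIcc)
  · refine splittingSeq_of_orbit_points hf hsurj hc hb ha hc_per hb_per ?_ (by rwa [uIcc_comm]) ?_
    · rw [uIcc_of_ge hbc.le, uIcc_of_ge hab.le]
      exact fun z hz => Or.inr (le_antisymm hz.2.2 hz.1.1)
    · exact fun hcb => hturn (hcb ▸ right_mem_uIcc)

end UnitInterval

theorem stmt_16_general (f : ℝ → ℝ) (hf : ContinuousOn f (Icc 0 1))
    (hsurj : f '' Icc 0 1 = Icc 0 1)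
    (p : ℝ) (hp : p ∈ Icc (0:ℝ) 1) (m : ℕ) (hm : 0 < m)
    (hper : f^[m] p = p)
    (i j k : ℕ)
    (hij : f^[i] p < f^[j] p) (hjk : f^[j] p < f^[k] p)
    (hcrit : max (f (f^[i] p)) (f (f^[k] p)) < f (f^[j] p) ∨
             f (f^[j] p) < min (f (f^[i] p)) (f (f^[k] p))) :
    SplittingSeq f := by
  obtain ⟨K, rfl⟩ := Nat.exists_eq_succ_of_ne_zero hm.ne'
  have hmaps : MapsTo f (Icc 0 1) (Icc 0 1) := (mapsTo_image f _).mono_right hsurj.subset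
  have hperiodic : ∀ n, IsPeriodicPt f (K + 1) (f^[n] p) := (IsPeriodicPt.apply_iterate hper ·)
  have hturn : f (f^[j] p) ∉ uIcc (f (f^[i] p)) (f (f^[k] p)) := by
    simp only [mem_uIcc, max_lt_iff, lt_min_iff] at hcrit ⊢
    grind
  exact splittingSeq_of_notMem_uIcc hf hsurj (hmaps.iterate i hp) (hmaps.iterate j hp)
    (hmaps.iterate k hp) hij hjk (hperiodic i) (hperiodic j) (hperiodic k) hturn

theorem stmt_16 (f : ℝ → ℝ) (hf : ContinuousOn f (Icc 0 1))
    (hsurj : f '' Icc 0 1 = Icc 0 1)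
    (p : ℝ) (hp : p ∈ Icc (0:ℝ) 1) (m : ℕ) (hm : 0 < m)
    (hper : f^[m] p = p) (hminper : ∀ j, 0 < j → j < m → f^[j] p ≠ p)
    (i j k : ℕ) (hi : i < m) (hj : j < m) (hk : k < m)
    (hij : f^[i] p < f^[j] p) (hjk : f^[j] p < f^[k] p)
    (hcrit : max (f (f^[i] p)) (f (f^[k] p)) < f (f^[j] p) ∨
             f (f^[j] p) < min (f (f^[i] p)) (f (f^[k] p))) :
    SplittingSeq f :=
  stmt_16_general f hf hsurj p hp m hm hper i j k hij hjk hcrit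
end

section
/- Let f : [0,1] → [0,1] be continuous and surjective, and suppose x_0 is a periodic point of period m > 2 with orbit x_0 < all other orbit points (x_0 is the minimum of its orbit). Then, writing x_i = f^i(x_0), we have x_1 > x_0 and f(x_{m-1}) = x_0 < x_1, and there exist indices i, j, k with x_i < x_j < x_k all in the orbit such that f(x_j) is either greater than both f(x_i) and f(x_k), or less than both. -/
/-
The minimum `x₀` of the orbit has `f x₀ = x₁ > x₀`, and `x₀` is the image of `x_{m-1}`. Let `x_c`
be the maximum of the orbit. If `c ≥ 2`, then `x₀ < x_{c-1} < x_c` and `f` maps `x_{c-1}` to the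
maximum `x_c`, above the images `x₁` and `x_{c+1}` of the outer points. If `c = 1`, then
`x₀ < x_{m-1} < x₁` and `f` maps `x_{m-1}` to the minimum `x₀`, below the images `x₁` and `x₂`.
-/

open Set Filter Topology

namespace Function

variable {α : Type*} {f : α → α} {x : α} {m : ℕ}

theorem minimalPeriod_eq_of_iterate_ne (hm : 0 < m) (hper : f^[m] x = x)
    (hne : ∀ j, 0 < j → j < m → f^[j] x ≠ x) : minimalPeriod f x = m :=
  (IsPeriodicPt.minimalPeriod_le hm hper).antisymm <| not_lt.1 fun hlt =>
    hne _ (IsPeriodicPt.minimalPeriod_pos hm hper) hlt iterate_minimalPeriod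

variable [LinearOrder α]

theorem exists_forall_ne_lt_of_injOn_Iio {g : ℕ → α} (hm : 0 < m) (hg : (Iio m).InjOn g) :
    ∃ c < m, ∀ j < m, j ≠ c → g j < g c := by
  obtain ⟨c, hc, hmax⟩ := (Finset.range m).exists_max_image g ⟨0, Finset.mem_range.2 hm⟩
  refine ⟨c, Finset.mem_range.1 hc, fun j hj hjc => (hmax j (Finset.mem_range.2 hj)).lt_of_ne ?_⟩
  exact fun h => hjc (hg hj (Finset.mem_range.1 hc) h)

theorem exists_orbit_turning_point_of_forall_lt_iterate (hm : 2 < m) (hper : f^[m] x = x)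
    (hmin : ∀ j, 0 < j → j < m → x < f^[j] x) :
    ∃ i j k : ℕ, i < m ∧ j < m ∧ k < m ∧
      f^[i] x < f^[j] x ∧ f^[j] x < f^[k] x ∧
      ((f (f^[i] x) < f (f^[j] x) ∧ f (f^[k] x) < f (f^[j] x)) ∨
       (f (f^[j] x) < f (f^[i] x) ∧ f (f^[j] x) < f (f^[k] x))) := by
  have hperiod : minimalPeriod f x = m :=
    minimalPeriod_eq_of_iterate_ne (by omega) hper fun j hj hjm => (hmin j hj hjm).ne'
  obtain ⟨c, hc, hmax⟩ := exists_forall_ne_lt_of_injOn_Iio (g := (f^[·] x)) (by omega)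
    (hperiod ▸ iterate_injOn_Iio_minimalPeriod)
  have hsucc (j : ℕ) : f (f^[j] x) = f^[j + 1] x := (iterate_succ_apply' f j x).symm
  have hc0 : c ≠ 0 := by
    rintro rfl
    exact (hmin 1 one_pos (by omega)).not_gt (hmax 1 (by omega) one_ne_zero)
  obtain rfl | hc2 := eq_or_ne c 1
  · refine ⟨0, m - 1, 1, by omega, by omega, by omega, hmin _ (by omega) (by omega),
      hmax _ (by omega) (by omega), Or.inr ⟨?_, ?_⟩⟩ <;>
      rw [hsucc, Nat.sub_add_cancel (by omega), hper, hsucc]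
    · exact hmin 1 one_pos (by omega)
    · exact hmin 2 two_pos hm
  · have hmax_succ : f^[c + 1] x < f^[c] x := by
      obtain hcm | hcm := (Nat.add_one_le_of_lt hc).eq_or_lt
      · rw [hcm, hper]; exact hmin c (by omega) hc
      · exact hmax _ hcm (by omega)
    refine ⟨0, c - 1, c, by omega, by omega, hc, hmin _ (by omega) (by omega),
      hmax _ (by omega) (by omega), Or.inl ⟨?_, ?_⟩⟩ <;>
      rw [hsucc, hsucc, Nat.sub_add_cancel (by omega)]
    · exact hmax 1 (by omega) hc2.symm
    · exact hmax_succ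

end Function

theorem stmt_17_general (f : ℝ → ℝ)
    (x₀ : ℝ) (m : ℕ) (hm : 2 < m)
    (hper : f^[m] x₀ = x₀)
    (hmin : ∀ j, 0 < j → j < m → x₀ < f^[j] x₀) :
    x₀ < f x₀ ∧ f (f^[m-1] x₀) = x₀ ∧
    ∃ i j k : ℕ, i < m ∧ j < m ∧ k < m ∧
      f^[i] x₀ < f^[j] x₀ ∧ f^[j] x₀ < f^[k] x₀ ∧
      ((f (f^[i] x₀) < f (f^[j] x₀) ∧ f (f^[k] x₀) < f (f^[j] x₀)) ∨
       (f (f^[j] x₀) < f (f^[i] x₀) ∧ f (f^[j] x₀) < f (f^[k] x₀))) := by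
  refine ⟨hmin 1 one_pos (by omega), ?_,
    Function.exists_orbit_turning_point_of_forall_lt_iterate hm hper hmin⟩
  rw [← Function.iterate_succ_apply' f, Nat.succ_eq_add_one, Nat.sub_add_cancel (by omega), hper]

theorem stmt_17 (f : ℝ → ℝ) (hf : ContinuousOn f (Icc 0 1))
    (hsurj : f '' Icc 0 1 = Icc 0 1)
    (x₀ : ℝ) (hx₀ : x₀ ∈ Icc (0:ℝ) 1) (m : ℕ) (hm : 2 < m)
    (hper : f^[m] x₀ = x₀) (hminper : ∀ j, 0 < j → j < m → f^[j] x₀ ≠ x₀)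
    (hmin : ∀ j, 0 < j → j < m → x₀ < f^[j] x₀) :
    x₀ < f x₀ ∧ f (f^[m-1] x₀) = x₀ ∧
    ∃ i j k : ℕ, i < m ∧ j < m ∧ k < m ∧
      f^[i] x₀ < f^[j] x₀ ∧ f^[j] x₀ < f^[k] x₀ ∧
      ((f (f^[i] x₀) < f (f^[j] x₀) ∧ f (f^[k] x₀) < f (f^[j] x₀)) ∨
       (f (f^[j] x₀) < f (f^[i] x₀) ∧ f (f^[j] x₀) < f (f^[k] x₀))) :=
  stmt_17_general f x₀ m hm hper hmin
end
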